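/- arXiv:2006.04208 — 9 statements merged into one kernel-verified Lean document; each statement's English description precedes it below -/
import Mathlib

section
/- Let P = (p_1, ..., p_k) and Q = (q_1, ..., q_k) be probability vectors with p_i > 0 for all i and p_1 ≥ p_2 ≥ ... ≥ p_k. If there exists j ≠ 1 with q_j ≥ q_1, then the KL divergence ∑_i q_i log(q_i/p_i) is at least -log(2√(p_1 p_2) + 1 - p_1 - p_2). -/
/-!
Tilting `P` by positive weights `w` gives the Donsker–Varadhan bound
`KL(Q, P) ≥ ∑ qᵢ log wᵢ - log ∑ pᵢ wᵢ`, a consequence of `log x ≤ x - 1`. Take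
`w₀ = √(pⱼ / p₀)`, `wⱼ = √(p₀ / pⱼ)` and `wᵢ = 1` otherwise: the first term is
`(qⱼ - q₀) log √(p₀ / pⱼ) ≥ 0`, and `∑ pᵢ wᵢ = 2√(p₀ pⱼ) + 1 - p₀ - pⱼ`. Since
`x ↦ 2√(p₀ x) - x` is increasing on `[0, p₀]` and `pⱼ ≤ p₁ ≤ p₀`, this mass is at most
`2√(p₀ p₁) + 1 - p₀ - p₁`.
-/

open Real Finset

noncomputable def klDivergence {ι : Type*} [Fintype ι] (Q P : ι → ℝ) : ℝ :=
  ∑ i, Q i * log (Q i / P i)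

lemma mul_log_add_sub_mul_le_mul_log_div {q p w : ℝ} (hq : 0 ≤ q) (hp : 0 < p) (hw : 0 < w) :
    q * log w + q - p * w ≤ q * log (q / p) := by
  rcases hq.eq_or_lt with rfl | hq
  · simp only [zero_mul, add_zero, zero_sub, zero_div, log_zero, mul_zero, Left.neg_nonpos_iff]
    positivity
  have hx : 0 < q / (p * w) := by positivity
  have key : q * (1 - (q / (p * w))⁻¹) ≤ q * log (q / (p * w)) :=
    mul_le_mul_of_nonneg_left (one_sub_inv_le_log_of_pos hx) hq.le
  have hcancel : q * (q / (p * w))⁻¹ = p * w := by field_simp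
  rw [mul_sub, mul_one, hcancel, div_mul_eq_div_div, log_div (by positivity) hw.ne'] at key
  linarith

theorem sum_mul_log_sub_log_sum_le_klDivergence {ι : Type*} [Fintype ι] {Q P w : ι → ℝ}
    (hQ : ∀ i, 0 ≤ Q i) (hQsum : ∑ i, Q i = 1) (hP : ∀ i, 0 < P i) (hw : ∀ i, 0 < w i) :
    ∑ i, Q i * log (w i) - log (∑ i, P i * w i) ≤ klDivergence Q P := by
  set S := ∑ i, P i * w i
  have hS : 0 < S := sum_pos (fun i _ ↦ mul_pos (hP i) (hw i))
    (nonempty_of_sum_ne_zero (by rw [hQsum]; exact one_ne_zero))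
  have pointwise i : Q i * log (w i / S) + Q i - P i * (w i / S) ≤ Q i * log (Q i / P i) :=
    mul_log_add_sub_mul_le_mul_log_div (hQ i) (hP i) (div_pos (hw i) hS)
  have total := sum_le_sum fun i (_ : i ∈ univ) ↦ pointwise i
  simp only [sum_sub_distrib, sum_add_distrib, log_div (hw _).ne' hS.ne', mul_sub, ← sum_mul,
    mul_div_assoc', ← sum_div, hQsum] at total
  have hmass : (∑ i, P i * w i) / S = 1 := div_self hS.ne'
  unfold klDivergence
  linarith

lemma sum_ite_ite_eq {ι M : Type*} [Fintype ι] [DecidableEq ι] [AddCommGroup M] {a b : ι}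
    (hab : a ≠ b) (x y z : ι → M) :
    ∑ i, (if i = a then x i else if i = b then y i else z i) =
      ∑ i, z i + (x a - z a) + (y b - z b) := by
  rw [add_assoc, ← sub_eq_iff_eq_add', ← sum_sub_distrib, sum_eq_add_of_mem a b (mem_univ _) (mem_univ _) hab]
  · simp [hab.symm]
  · rintro i - ⟨hia, hib⟩
    simp [hia, hib]

lemma sum_mul_ite_ite_eq {ι : Type*} [Fintype ι] [DecidableEq ι] {a b : ι} (hab : a ≠ b)
    (f : ι → ℝ) (x y : ℝ) :
    ∑ i, f i * (if i = a then x else if i = b then y else 1) =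
      ∑ i, f i + f a * (x - 1) + f b * (y - 1) := by
  simp only [mul_ite, mul_one, sum_ite_ite_eq hab]
  ring

lemma sum_mul_log_ite_ite_eq {ι : Type*} [Fintype ι] [DecidableEq ι] {a b : ι} (hab : a ≠ b)
    (f : ι → ℝ) (x y : ℝ) :
    ∑ i, f i * log (if i = a then x else if i = b then y else 1) = f a * log x + f b * log y := by
  simp only [apply_ite log, log_one, mul_ite, mul_zero, sum_ite_ite_eq hab, sum_const_zero,
    sub_zero, zero_add]

theorem neg_log_le_klDivergence_of_le {ι : Type*} [Fintype ι] [DecidableEq ι] {Q P : ι → ℝ}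
    {a b : ι} (hab : a ≠ b) (hQ : ∀ i, 0 ≤ Q i) (hQsum : ∑ i, Q i = 1) (hP : ∀ i, 0 < P i)
    (hPsum : ∑ i, P i = 1) (hPba : P b ≤ P a) (hQab : Q a ≤ Q b) :
    -log (2 * √(P a * P b) + 1 - P a - P b) ≤ klDivergence Q P := by
  set sa := √(P a)
  set sb := √(P b)
  have hsa : 0 < sa := sqrt_pos.2 (hP a)
  have hsb : 0 < sb := sqrt_pos.2 (hP b)
  set w : ι → ℝ := fun i ↦ if i = a then sb / sa else if i = b then sa / sb else 1
  have hw i : 0 < w i := by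
    simp only [w]
    split_ifs <;> positivity
  have hmass : ∑ i, P i * w i = 2 * √(P a * P b) + 1 - P a - P b := by
    have hPa : P a * (sb / sa) = sa * sb := by
      rw [← show sa * sa = P a from mul_self_sqrt (hP a).le]; field_simp
    have hPb : P b * (sa / sb) = sa * sb := by
      rw [← show sb * sb = P b from mul_self_sqrt (hP b).le]; field_simp
    rw [sum_mul_ite_ite_eq hab, hPsum, sqrt_mul (hP a).le, mul_sub, mul_sub, hPa, hPb]
    ring
  have hgain : 0 ≤ ∑ i, Q i * log (w i) := by
    rw [sum_mul_log_ite_ite_eq hab, ← inv_div, log_inv]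
    have hlog : 0 ≤ log (sa / sb) :=
      log_nonneg ((one_le_div hsb).2 (sqrt_le_sqrt hPba))
    nlinarith
  have hbound := sum_mul_log_sub_log_sum_le_klDivergence hQ hQsum hP hw
  rw [hmass] at hbound
  linarith

lemma two_sqrt_mul_sub_le {p x y : ℝ} (hy : 0 ≤ y) (hyx : y ≤ x) (hxp : x ≤ p) :
    2 * √(p * y) - y ≤ 2 * √(p * x) - x := by
  have hx : 0 ≤ x := hy.trans hyx
  rw [sqrt_mul (hx.trans hxp), sqrt_mul (hx.trans hxp), ← sq_sqrt hx, ← sq_sqrt hy,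
    sqrt_sq (sqrt_nonneg _), sqrt_sq (sqrt_nonneg _)]
  have hvu : √y ≤ √x := sqrt_le_sqrt hyx
  have hus : √x ≤ √p := sqrt_le_sqrt hxp
  nlinarith [sqrt_nonneg y]

/-- KL divergence lower bound when the argmax of `Q` differs from that of `P`. -/
theorem kl_lower_bound (k : ℕ) (P Q : Fin (k + 2) → ℝ)
    (hPpos : ∀ i, 0 < P i) (hPsum : ∑ i, P i = 1)
    (hQnn : ∀ i, 0 ≤ Q i) (hQsum : ∑ i, Q i = 1)
    (hPmono : ∀ i j : Fin (k + 2), i ≤ j → P j ≤ P i)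
    (hmax : ∃ j : Fin (k + 2), j ≠ 0 ∧ Q 0 ≤ Q j) :
    -Real.log (2 * Real.sqrt (P 0 * P 1) + 1 - P 0 - P 1) ≤
      ∑ i, Q i * Real.log (Q i / P i) := by
  obtain ⟨j, hj0, hQj⟩ := hmax
  have hP1j : P j ≤ P 1 := hPmono 1 j (Fin.one_le_of_ne_zero hj0)
  have hP01 : P 1 ≤ P 0 := hPmono 0 1 (Fin.zero_le _)
  have hPj : P 0 + P j ≤ 1 :=
    hPsum ▸ add_le_sum (fun i _ ↦ (hPpos i).le) (mem_univ _) (mem_univ _) hj0.symm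
  have hpos : 0 < 2 * √(P 0 * P j) + 1 - P 0 - P j := by
    have := sqrt_pos.2 (mul_pos (hPpos 0) (hPpos j))
    linarith
  have hmono := two_sqrt_mul_sub_le (hPpos j).le hP1j hP01
  calc -log (2 * √(P 0 * P 1) + 1 - P 0 - P 1)
      ≤ -log (2 * √(P 0 * P j) + 1 - P 0 - P j) := neg_le_neg (log_le_log hpos (by linarith))
    _ ≤ _ := neg_log_le_klDivergence_of_le hj0.symm hQnn hQsum hPpos hPsum (hP1j.trans hP01) hQj
end

section
/- Let P = (p_1, ..., p_k) and Q = (q_1, ..., q_k) be probability vectors with p_i > 0 for all i and p_1 ≥ p_2 ≥ ... ≥ p_k. If there exists j ≠ 1 with q_j ≥ q_1, then the squared Hellinger distance 1 - ∑_i √(p_i q_i) is at least 1 - √((2 - (√p_1 - √p_2)^2)/2). -/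
/-!
Let `j ≠ 1` with `q_1 ≤ q_j`, and put `a = √p_1`, `b = √p_j`. Cauchy–Schwarz with weights gives
`(∑ √(p_i q_i))² ≤ (∑ w_i p_i) (∑ q_i / w_i)`. The weights `w_1 = (a + b) / 2a`, `w_j = (a + b) / 2b`
and `w_i = 1` otherwise make `∑ w_i p_i = 1 - (a - b)² / 2`, while
`∑ q_i / w_i = 1 - (a - b)(q_j - q_1) / (a + b) ≤ 1`. Finally `(a - b)² ≥ (√p_1 - √p_2)²`
because `p_j ≤ p_2 ≤ p_1`.
-/

open Finset Real

variable {ι : Type*}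

theorem sq_sum_sqrt_mul_le_weighted (s : Finset ι) {p q w : ι → ℝ} (hp : ∀ i ∈ s, 0 ≤ p i)
    (hq : ∀ i ∈ s, 0 ≤ q i) (hw : ∀ i ∈ s, 0 < w i) :
    (∑ i ∈ s, √(p i * q i)) ^ 2 ≤ (∑ i ∈ s, w i * p i) * ∑ i ∈ s, q i / w i :=
  sum_sq_le_sum_mul_sum_of_sq_le_mul s (fun i hi => mul_nonneg (hw i hi).le (hp i hi))
    (fun i hi => div_nonneg (hq i hi) (hw i hi).le) fun i hi => le_of_eq <| by
      rw [sq_sqrt (mul_nonneg (hp i hi) (hq i hi))]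
      field_simp [(hw i hi).ne']

theorem sum_eq_add_add_sum_compl_pair [Fintype ι] [DecidableEq ι] {M : Type*} [AddCommMonoid M]
    {i j : ι} (hij : i ≠ j) (f : ι → M) : ∑ k, f k = f i + f j + ∑ k ∈ {i, j}ᶜ, f k := by
  rw [← sum_add_sum_compl {i, j} f, sum_pair hij]

theorem sum_sqrt_mul_le_of_opposite_order [Fintype ι] [DecidableEq ι] {P Q : ι → ℝ} {i j : ι}
    (hij : i ≠ j) (hP : ∀ k, 0 ≤ P k) (hPsum : ∑ k, P k = 1) (hQ : ∀ k, 0 ≤ Q k)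
    (hQsum : ∑ k, Q k = 1) (hPj : 0 < P j) (hPji : P j ≤ P i) (hQij : Q i ≤ Q j) :
    ∑ k, √(P k * Q k) ≤ √(1 - (√(P i) - √(P j)) ^ 2 / 2) := by
  set a := √(P i)
  set b := √(P j)
  have hb : 0 < b := sqrt_pos.2 hPj
  have hba : b ≤ a := sqrt_le_sqrt hPji
  have ha : 0 < a := hb.trans_le hba
  have hPi_sq : P i = a ^ 2 := (sq_sqrt (hP i)).symm
  have hPj_sq : P j = b ^ 2 := (sq_sqrt (hP j)).symm
  let w : ι → ℝ := fun k => if k = i then (a + b) / (2 * a) else if k = j then (a + b) / (2 * b) else 1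
  have hw : ∀ k, 0 < w k := fun k => by dsimp only [w]; split_ifs <;> positivity
  have hwi : w i = (a + b) / (2 * a) := if_pos rfl
  have hwj : w j = (a + b) / (2 * b) := by simp [w, hij.symm]
  have hw_compl : ∀ k ∈ ({i, j} : Finset ι)ᶜ, w k = 1 := fun k hk => by
    simp only [mem_compl, mem_insert, mem_singleton, not_or] at hk
    simp [w, hk.1, hk.2]
  have hsum_compl (f : ι → ℝ) (hf : ∑ k, f k = 1) : ∑ k ∈ {i, j}ᶜ, f k = 1 - f i - f j := by
    linear_combination hf - sum_eq_add_add_sum_compl_pair hij f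
  have hwP : ∑ k, w k * P k = 1 - (a - b) ^ 2 / 2 := by
    rw [sum_eq_add_add_sum_compl_pair hij, sum_congr rfl fun k hk => by rw [hw_compl k hk, one_mul],
      hsum_compl P hPsum, hwi, hwj, hPi_sq, hPj_sq]
    field_simp
    ring
  have hwQ : ∑ k, Q k / w k ≤ 1 := by
    rw [sum_eq_add_add_sum_compl_pair hij, sum_congr rfl fun k hk => by rw [hw_compl k hk, div_one],
      hsum_compl Q hQsum, hwi, hwj, div_div_eq_mul_div, div_div_eq_mul_div]
    have : Q i * (2 * a) / (a + b) + Q j * (2 * b) / (a + b) ≤ Q i + Q j := by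
      rw [← add_div, div_le_iff₀ (by positivity)]
      nlinarith [mul_nonneg (sub_nonneg.2 hba) (sub_nonneg.2 hQij)]
    linarith
  have hwP_nonneg : 0 ≤ 1 - (a - b) ^ 2 / 2 :=
    hwP ▸ sum_nonneg fun k _ => mul_nonneg (hw k).le (hP k)
  refine le_sqrt_of_sq_le ?_
  calc (∑ k, √(P k * Q k)) ^ 2 ≤ (∑ k, w k * P k) * ∑ k, Q k / w k :=
        sq_sum_sqrt_mul_le_weighted _ (fun k _ => hP k) (fun k _ => hQ k) fun k _ => hw k
    _ ≤ (1 - (a - b) ^ 2 / 2) * 1 := by rw [hwP]; gcongr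
    _ = 1 - (a - b) ^ 2 / 2 := mul_one _

/-- Squared Hellinger distance lower bound when the argmax of `Q` differs from that of `P`. -/
theorem hellinger_lower_bound (k : ℕ) (P Q : Fin (k + 2) → ℝ)
    (hPpos : ∀ i, 0 < P i) (hPsum : ∑ i, P i = 1)
    (hQnn : ∀ i, 0 ≤ Q i) (hQsum : ∑ i, Q i = 1)
    (hPmono : ∀ i j : Fin (k + 2), i ≤ j → P j ≤ P i)
    (hmax : ∃ j : Fin (k + 2), j ≠ 0 ∧ Q 0 ≤ Q j) :
    1 - Real.sqrt ((2 - (Real.sqrt (P 0) - Real.sqrt (P 1)) ^ 2) / 2) ≤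
      1 - ∑ i, Real.sqrt (P i * Q i) := by
  obtain ⟨j, hj0, hQ0j⟩ := hmax
  have hS := sum_sqrt_mul_le_of_opposite_order hj0.symm (fun i => (hPpos i).le) hPsum hQnn hQsum
    (hPpos j) (hPmono 0 j (Fin.zero_le j)) hQ0j
  have hj1 : √(P j) ≤ √(P 1) := sqrt_le_sqrt (hPmono 1 j (Fin.one_le_of_ne_zero hj0))
  have h10 : √(P 1) ≤ √(P 0) := sqrt_le_sqrt (hPmono 0 1 (Fin.zero_le 1))
  have hgap : (√(P 0) - √(P 1)) ^ 2 ≤ (√(P 0) - √(P j)) ^ 2 :=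
    pow_le_pow_left₀ (sub_nonneg.2 h10) (sub_le_sub_left hj1 _) 2
  have : √(1 - (√(P 0) - √(P j)) ^ 2 / 2) ≤ √((2 - (√(P 0) - √(P 1)) ^ 2) / 2) :=
    sqrt_le_sqrt (by linarith)
  linarith
end

section
/- Let P = (p_1, ..., p_k) and Q = (q_1, ..., q_k) be probability vectors with p_i > 0 for all i and p_1 ≥ p_2 ≥ ... ≥ p_k. If there exists j ≠ 1 with q_j ≥ q_1, then the chi-squared divergence ∑_i (q_i - p_i)^2 / p_i is at least (p_1 - p_2)^2 / ((p_1 + p_2) - (p_1 - p_2)^2). -/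
/-!
Cauchy–Schwarz against the test function `c = 𝟙_{0} - 𝟙_{j}`, centred under `P`, gives
`χ²(Q, P) ≥ ((Q₀ - Q_j) - (P₀ - P_j))² / Var_P c` with `Var_P c = P₀ + P_j - (P₀ - P_j)²`.
Since `Q₀ ≤ Q_j` the numerator is at least `(P₀ - P_j)²`, and the bound only decreases when
`P_j` is replaced by the larger `P₁`.
-/

open Finset

section

variable {ι : Type*} [Fintype ι]

noncomputable def chiSquaredDiv (Q P : ι → ℝ) : ℝ := ∑ i, (Q i - P i) ^ 2 / P i

theorem sq_sum_mul_sub_le_mul_chiSquaredDiv {P : ι → ℝ} (hP : ∀ i, 0 < P i) (Q c : ι → ℝ) :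
    (∑ i, c i * (Q i - P i)) ^ 2 ≤ (∑ i, c i ^ 2 * P i) * chiSquaredDiv Q P :=
  sum_sq_le_sum_mul_sum_of_sq_le_mul _
    (fun i _ ↦ mul_nonneg (sq_nonneg _) (hP i).le)
    (fun i _ ↦ div_nonneg (sq_nonneg _) (hP i).le)
    (fun i _ ↦ by field_simp [(hP i).ne']; rfl)

/-- The variational lower bound: `χ²(Q, P) ≥ (E_Q c - E_P c)² / Var_P c`, without division. -/
theorem sq_sum_mul_sub_le_variance_mul_chiSquaredDiv {P Q : ι → ℝ} (hP : ∀ i, 0 < P i)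
    (hPsum : ∑ i, P i = 1) (hQsum : ∑ i, Q i = 1) (c : ι → ℝ) :
    (∑ i, c i * (Q i - P i)) ^ 2 ≤
      (∑ i, c i ^ 2 * P i - (∑ i, c i * P i) ^ 2) * chiSquaredDiv Q P := by
  set m := ∑ i, c i * P i
  have hcenter : ∑ i, (c i - m) * (Q i - P i) = ∑ i, c i * (Q i - P i) := by
    simp only [sub_mul, mul_sub, sum_sub_distrib, ← mul_sum, hPsum, hQsum]
    ring
  have hvar : ∑ i, (c i - m) ^ 2 * P i = ∑ i, c i ^ 2 * P i - m ^ 2 := by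
    calc ∑ i, (c i - m) ^ 2 * P i
        = ∑ i, c i ^ 2 * P i - 2 * m * ∑ i, c i * P i + m ^ 2 * ∑ i, P i := by
          simp only [mul_sum, ← sum_sub_distrib, ← sum_add_distrib]
          exact sum_congr rfl fun i _ ↦ by ring
      _ = ∑ i, c i ^ 2 * P i - m ^ 2 := by rw [hPsum]; ring
  simpa only [hcenter, hvar] using sq_sum_mul_sub_le_mul_chiSquaredDiv hP Q (fun i ↦ c i - m)

theorem sq_sub_sub_le_mul_chiSquaredDiv {P Q : ι → ℝ} (hP : ∀ i, 0 < P i)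
    (hPsum : ∑ i, P i = 1) (hQsum : ∑ i, Q i = 1) {i j : ι} (hij : i ≠ j) :
    ((Q i - Q j) - (P i - P j)) ^ 2 ≤ (P i + P j - (P i - P j) ^ 2) * chiSquaredDiv Q P := by
  classical
  set c : ι → ℝ := Pi.single i 1 - Pi.single j 1
  have hc : ∀ x : ι → ℝ, ∑ l, c l * x l = x i - x j := fun x ↦ by
    simp [c, sub_mul, sum_sub_distrib, Pi.single_apply]
  have hci : c i = 1 := by simp [c, hij]
  have hcj : c j = -1 := by simp [c, hij.symm]
  have hc2 : ∑ l, c l ^ 2 * P l = P i + P j := by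
    simp only [sq, mul_assoc, hc (fun l ↦ c l * P l), hci, hcj]
    ring
  have := sq_sum_mul_sub_le_variance_mul_chiSquaredDiv hP hPsum hQsum c
  rwa [hc2, hc P, hc (fun l ↦ Q l - P l), sub_sub_sub_comm] at this

theorem add_sub_sub_sq_pos {P : ι → ℝ} (hP : ∀ i, 0 < P i)
    (hPsum : ∑ i, P i = 1) {i j : ι} (hij : i ≠ j) :
    0 < P i + P j - (P i - P j) ^ 2 := by
  classical
  have hpair : P i + P j ≤ 1 := by
    rw [← sum_pair hij, ← hPsum]
    exact sum_le_univ_sum_of_nonneg fun l ↦ (hP l).le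
  nlinarith [hP i, hP j]

theorem sq_sub_div_le_chiSquaredDiv {P Q : ι → ℝ} (hP : ∀ i, 0 < P i)
    (hPsum : ∑ i, P i = 1) (hQsum : ∑ i, Q i = 1) {i j : ι} (hij : i ≠ j)
    (hPij : P j ≤ P i) (hQij : Q i ≤ Q j) :
    (P i - P j) ^ 2 / (P i + P j - (P i - P j) ^ 2) ≤ chiSquaredDiv Q P := by
  rw [div_le_iff₀' (add_sub_sub_sq_pos hP hPsum hij)]
  calc (P i - P j) ^ 2 ≤ ((Q i - Q j) - (P i - P j)) ^ 2 := by nlinarith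
    _ ≤ _ := sq_sub_sub_le_mul_chiSquaredDiv hP hPsum hQsum hij

end

theorem sq_sub_div_add_sub_sq_le_of_le {a b b' : ℝ} (hb' : b' ≤ b) (hba : b ≤ a)
    (hpos : 0 < a + b' - (a - b') ^ 2) :
    (a - b) ^ 2 / (a + b - (a - b) ^ 2) ≤ (a - b') ^ 2 / (a + b' - (a - b') ^ 2) :=
  div_le_div₀ (sq_nonneg _) (by nlinarith) hpos (by nlinarith)

theorem chi_squared_lower_bound_general (k : ℕ) (P Q : Fin (k + 2) → ℝ)
    (hPpos : ∀ i, 0 < P i) (hPsum : ∑ i, P i = 1)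
    (hQsum : ∑ i, Q i = 1)
    (hPmono : ∀ i j : Fin (k + 2), i ≤ j → P j ≤ P i)
    (hmax : ∃ j : Fin (k + 2), j ≠ 0 ∧ Q 0 ≤ Q j) :
    (P 0 - P 1) ^ 2 / ((P 0 + P 1) - (P 0 - P 1) ^ 2) ≤
      ∑ i, (Q i - P i) ^ 2 / P i := by
  obtain ⟨j, hj0, hQj⟩ := hmax
  have hPj1 : P j ≤ P 1 := hPmono 1 j (Fin.one_le_of_ne_zero hj0)
  have hP10 : P 1 ≤ P 0 := hPmono 0 1 (Fin.zero_le _)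
  calc (P 0 - P 1) ^ 2 / ((P 0 + P 1) - (P 0 - P 1) ^ 2)
      ≤ (P 0 - P j) ^ 2 / (P 0 + P j - (P 0 - P j) ^ 2) :=
        sq_sub_div_add_sub_sq_le_of_le hPj1 hP10 (add_sub_sub_sq_pos hPpos hPsum hj0.symm)
    _ ≤ chiSquaredDiv Q P :=
        sq_sub_div_le_chiSquaredDiv hPpos hPsum hQsum hj0.symm (hPj1.trans hP10) hQj

/-- Chi-squared divergence lower bound when the argmax of `Q` differs from that of `P`. -/
theorem chi_squared_lower_bound (k : ℕ) (P Q : Fin (k + 2) → ℝ)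
    (hPpos : ∀ i, 0 < P i) (hPsum : ∑ i, P i = 1)
    (hQnn : ∀ i, 0 ≤ Q i) (hQsum : ∑ i, Q i = 1)
    (hPmono : ∀ i j : Fin (k + 2), i ≤ j → P j ≤ P i)
    (hmax : ∃ j : Fin (k + 2), j ≠ 0 ∧ Q 0 ≤ Q j) :
    (P 0 - P 1) ^ 2 / ((P 0 + P 1) - (P 0 - P 1) ^ 2) ≤
      ∑ i, (Q i - P i) ^ 2 / P i :=
  chi_squared_lower_bound_general k P Q hPpos hPsum hQsum hPmono hmax
end

section
/- Let P = (p_1, ..., p_k) and Q = (q_1, ..., q_k) be probability vectors with p_i > 0 for all i and p_1 ≥ p_2 ≥ ... ≥ p_k. If there exists j ≠ 1 with q_j ≥ q_1, then the Bhattacharyya distance -log(∑_i √(p_i q_i)) is at least -log(√((2√(p_1 p_2) - p_1 - p_2 + 2)/2)). -/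
/-- Two-term rearrangement bound: if `v ≤ u` and `a ≤ b` (all nonneg), then
`u*a + v*b ≤ (u+v) * √((a²+b²)/2)`. -/
lemma two_term_aux (u v a b : ℝ) (hv : 0 ≤ v) (hvu : v ≤ u) (ha : 0 ≤ a) (hab : a ≤ b) :
    u * a + v * b ≤ (u + v) * Real.sqrt ((a ^ 2 + b ^ 2) / 2) := by
  set r := Real.sqrt ((a ^ 2 + b ^ 2) / 2) with hr
  have hr0 : 0 ≤ r := Real.sqrt_nonneg _
  have hr2 : r ^ 2 = (a ^ 2 + b ^ 2) / 2 := Real.sq_sqrt (by positivity)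
  have h1 : a ≤ r := by nlinarith
  have h2 : a + b ≤ 2 * r := by nlinarith
  nlinarith

set_option maxHeartbeats 1000000 in
/-- Bhattacharyya distance lower bound when the argmax of `Q` differs from that of `P`. -/
theorem bhattacharyya_lower_bound (k : ℕ) (P Q : Fin (k + 2) → ℝ)
    (hPpos : ∀ i, 0 < P i) (hPsum : ∑ i, P i = 1)
    (hQnn : ∀ i, 0 ≤ Q i) (hQsum : ∑ i, Q i = 1)
    (hPmono : ∀ i j : Fin (k + 2), i ≤ j → P j ≤ P i)
    (hmax : ∃ j : Fin (k + 2), j ≠ 0 ∧ Q 0 ≤ Q j) :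
    -Real.log (Real.sqrt ((2 * Real.sqrt (P 0 * P 1) - P 0 - P 1 + 2) / 2)) ≤
      -Real.log (∑ i, Real.sqrt (P i * Q i)) := by
  obtain ⟨j, hj0, hQj⟩ := hmax
  have hj1 : (1 : Fin (k + 2)) ≤ j := by
    have h0 : (j : ℕ) ≠ 0 := by
      intro h; exact hj0 (Fin.ext (by simpa using h))
    rw [Fin.le_def]
    have : ((1 : Fin (k + 2)) : ℕ) = 1 := rfl
    omega
  set u := Real.sqrt (P 0) with hu
  set v := Real.sqrt (P j) with hv
  have hP0 := hPpos 0
  have hPj := hPpos j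
  have hP1 := hPpos 1
  have hu0 : 0 < u := Real.sqrt_pos.mpr hP0
  have hv0 : 0 < v := Real.sqrt_pos.mpr hPj
  have huv : v ≤ u := Real.sqrt_le_sqrt (hPmono 0 j (Fin.zero_le j))
  have hu2 : u ^ 2 = P 0 := Real.sq_sqrt hP0.le
  have hv2 : v ^ 2 = P j := Real.sq_sqrt hPj.le
  -- the modified vectors for Cauchy–Schwarz
  set f : Fin (k + 2) → ℝ := fun i =>
    if i = 0 then (u + v) / Real.sqrt 2 else if i = j then 0 else Real.sqrt (P i) with hf
  set g : Fin (k + 2) → ℝ := fun i =>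
    if i = 0 then Real.sqrt (Q 0 + Q j) else if i = j then 0 else Real.sqrt (Q i) with hg
  set s : Finset (Fin (k + 2)) := (Finset.univ.erase 0).erase j with hs
  have hjmem : j ∈ Finset.univ.erase (0 : Fin (k + 2)) :=
    Finset.mem_erase.mpr ⟨hj0, Finset.mem_univ j⟩
  have hsplit : ∀ h : Fin (k + 2) → ℝ,
      ∑ i, h i = h 0 + (h j + ∑ i ∈ s, h i) := by
    intro h
    rw [← Finset.add_sum_erase _ h (Finset.mem_univ (0 : Fin (k + 2))),
      ← Finset.add_sum_erase _ h hjmem]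
  have hmem : ∀ i ∈ s, i ≠ 0 ∧ i ≠ j := by
    intro i hi
    simp only [hs, Finset.mem_erase] at hi
    exact ⟨hi.2.1, hi.1⟩
  -- sums of squares
  have hsum_g2 : ∑ i, g i ^ 2 = 1 := by
    rw [hsplit]
    have h0 : g 0 ^ 2 = Q 0 + Q j := by
      simp only [hg, if_pos rfl]
      exact Real.sq_sqrt (add_nonneg (hQnn 0) (hQnn j))
    have hjj : g j ^ 2 = 0 := by
      simp [hg, hj0]
    have hrest : ∑ i ∈ s, g i ^ 2 = ∑ i ∈ s, Q i := by
      refine Finset.sum_congr rfl fun i hi => ?_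
      obtain ⟨h1, h2⟩ := hmem i hi
      simp only [hg, if_neg h1, if_neg h2]
      exact Real.sq_sqrt (hQnn i)
    rw [h0, hjj, hrest]
    have := hsplit Q
    rw [hQsum] at this
    linarith
  have hsum_f2 : ∑ i, f i ^ 2 = (u + v) ^ 2 / 2 + (1 - P 0 - P j) := by
    rw [hsplit]
    have h0 : f 0 ^ 2 = (u + v) ^ 2 / 2 := by
      simp only [hf, if_pos rfl]
      rw [div_pow, Real.sq_sqrt (by norm_num : (0:ℝ) ≤ 2)]
    have hjj : f j ^ 2 = 0 := by
      simp [hf, hj0]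
    have hrest : ∑ i ∈ s, f i ^ 2 = ∑ i ∈ s, P i := by
      refine Finset.sum_congr rfl fun i hi => ?_
      obtain ⟨h1, h2⟩ := hmem i hi
      simp only [hf, if_neg h1, if_neg h2]
      exact Real.sq_sqrt (hPpos i).le
    rw [h0, hjj, hrest]
    have := hsplit P
    rw [hPsum] at this
    linarith
  -- the sum S is bounded by ∑ f i * g i
  set S := ∑ i, Real.sqrt (P i * Q i) with hS
  have hfg : S ≤ ∑ i, f i * g i := by
    rw [hS, hsplit (fun i => Real.sqrt (P i * Q i)), hsplit (fun i => f i * g i)]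
    have hrest : ∑ i ∈ s, Real.sqrt (P i * Q i) = ∑ i ∈ s, f i * g i := by
      refine Finset.sum_congr rfl fun i hi => ?_
      obtain ⟨h1, h2⟩ := hmem i hi
      simp only [hf, hg, if_neg h1, if_neg h2]
      exact Real.sqrt_mul (hPpos i).le _
    rw [hrest]
    have hjj : f j * g j = 0 := by simp [hf, hg, hj0]
    have h0 : Real.sqrt (P 0 * Q 0) + Real.sqrt (P j * Q j) ≤ f 0 * g 0 := by
      have e1 : Real.sqrt (P 0 * Q 0) = u * Real.sqrt (Q 0) := Real.sqrt_mul hP0.le _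
      have e2 : Real.sqrt (P j * Q j) = v * Real.sqrt (Q j) := Real.sqrt_mul hPj.le _
      have e3 : f 0 * g 0 = (u + v) * Real.sqrt ((Real.sqrt (Q 0) ^ 2 + Real.sqrt (Q j) ^ 2) / 2) := by
        simp only [hf, hg, if_pos rfl]
        rw [Real.sq_sqrt (hQnn 0), Real.sq_sqrt (hQnn j)]
        rw [div_mul_eq_mul_div, mul_comm, ← div_mul_eq_mul_div, ← Real.sqrt_div' _ (by norm_num)]
        ring_nf
      rw [e1, e2, e3]
      exact two_term_aux u v (Real.sqrt (Q 0)) (Real.sqrt (Q j)) hv0.le huv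
        (Real.sqrt_nonneg _) (Real.sqrt_le_sqrt hQj)
    linarith
  -- positivity of S
  have hSpos : 0 < S := by
    have hex : ∃ i, 0 < Q i := by
      by_contra h
      push_neg at h
      have : ∑ i, Q i = 0 :=
        Finset.sum_eq_zero fun i _ => le_antisymm (h i) (hQnn i)
      rw [hQsum] at this; norm_num at this
    obtain ⟨i, hi⟩ := hex
    have : 0 < Real.sqrt (P i * Q i) := Real.sqrt_pos.mpr (mul_pos (hPpos i) hi)
    calc 0 < Real.sqrt (P i * Q i) := this
      _ ≤ S := by
        rw [hS]
        exact Finset.single_le_sum (f := fun i => Real.sqrt (P i * Q i))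
          (fun i _ => Real.sqrt_nonneg _) (Finset.mem_univ i)
  -- Cauchy–Schwarz
  set T := (u + v) ^ 2 / 2 + (1 - P 0 - P j) with hT
  have hCS : S ≤ Real.sqrt T := by
    have h1 : (∑ i, f i * g i) ^ 2 ≤ T := by
      have := Finset.sum_mul_sq_le_sq_mul_sq Finset.univ f g
      rw [hsum_f2, hsum_g2, mul_one] at this
      exact this
    have h2 : ∑ i, f i * g i ≤ Real.sqrt T := by
      have hnn : 0 ≤ ∑ i, f i * g i := le_trans hSpos.le hfg
      rw [show T = T from rfl] at h1
      calc ∑ i, f i * g i = Real.sqrt ((∑ i, f i * g i) ^ 2) := (Real.sqrt_sq hnn).symm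
        _ ≤ Real.sqrt T := Real.sqrt_le_sqrt h1
    exact le_trans hfg h2
  -- rewrite T and compare with the target
  have hTeq : T = (2 * Real.sqrt (P 0 * P j) - P 0 - P j + 2) / 2 := by
    have huvm : u * v = Real.sqrt (P 0 * P j) := (Real.sqrt_mul hP0.le _).symm
    rw [hT]
    nlinarith [hu2, hv2, huvm]
  have hmono : (2 * Real.sqrt (P 0 * P j) - P 0 - P j + 2) / 2 ≤
      (2 * Real.sqrt (P 0 * P 1) - P 0 - P 1 + 2) / 2 := by
    set y := Real.sqrt (P 1) with hy
    have hy0 : 0 < y := Real.sqrt_pos.mpr hP1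
    have hy2 : y ^ 2 = P 1 := Real.sq_sqrt hP1.le
    have hvy : v ≤ y := Real.sqrt_le_sqrt (hPmono 1 j hj1)
    have hyu : y ≤ u := Real.sqrt_le_sqrt (hPmono 0 1 (Fin.zero_le 1))
    have e1 : Real.sqrt (P 0 * P j) = u * v := Real.sqrt_mul hP0.le _
    have e2 : Real.sqrt (P 0 * P 1) = u * y := Real.sqrt_mul hP0.le _
    rw [e1, e2]
    nlinarith [mul_nonneg (sub_nonneg.mpr hvy) (by nlinarith : (0:ℝ) ≤ 2 * u - y - v)]
  have hfinal : S ≤ Real.sqrt ((2 * Real.sqrt (P 0 * P 1) - P 0 - P 1 + 2) / 2) := by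
    calc S ≤ Real.sqrt T := hCS
      _ = Real.sqrt ((2 * Real.sqrt (P 0 * P j) - P 0 - P j + 2) / 2) := by rw [hTeq]
      _ ≤ _ := Real.sqrt_le_sqrt hmono
  exact neg_le_neg (Real.log_le_log hSpos hfinal)
end

section
/- Let α > 1 and let P = (p_1, ..., p_k), Q = (q_1, ..., q_k) be probability vectors with p_i > 0 for all i and p_1 ≥ p_2 ≥ ... ≥ p_k. If there exists j ≠ 1 with q_j ≥ q_1, then the Rényi divergence (1/(α-1)) log(∑_i q_i^α p_i^{1-α}) is at least -log(1 - p_1 - p_2 + 2((p_1^{1-α} + p_2^{1-α})/2)^{1/(1-α)}). -/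
/-!
Since `(q, p) ↦ q ^ α * p ^ (1 - α)` is the perspective of the convex function `t ↦ t ^ α`,
merging cells can only decrease `∑ q ^ α * p ^ (1 - α)`. After a swap of two entries of `Q`, which
lowers the sum by the rearrangement inequality, we may assume `Q 0 ≤ Q 1`. The pair of cells
`{0, 1}` is then at least `(Q 0 + Q 1) ^ α * (2 * M) ^ (1 - α)`, with `M` the power mean of order
`1 - α` of `P 0` and `P 1` (Chebyshev's sum inequality plus convexity of `t ^ α`). Merging this
cell with all the others leaves one cell of `Q`-mass `1` and `P`-weight `1 - P 0 - P 1 + 2 * M`.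
-/

open Finset Real

lemma rpow_sum_mul_rpow_sum_le {ι : Type*} {α : ℝ} (hα : 1 ≤ α) (s : Finset ι) {q p : ι → ℝ}
    (hq : ∀ i ∈ s, 0 ≤ q i) (hp : ∀ i ∈ s, 0 < p i) :
    (∑ i ∈ s, q i) ^ α * (∑ i ∈ s, p i) ^ (1 - α) ≤ ∑ i ∈ s, q i ^ α * p i ^ (1 - α) := by
  rcases s.eq_empty_or_nonempty with rfl | hs
  · simp [zero_rpow (by positivity : α ≠ 0)]
  set σ := ∑ i ∈ s, p i
  have hσ : 0 < σ := sum_pos hp hs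
  have jensen := rpow_arith_mean_le_arith_mean_rpow s (fun i => p i / σ) (fun i => q i / p i)
    (fun i hi => div_nonneg (hp i hi).le hσ.le) (by rw [← sum_div, div_self hσ.ne'])
    (fun i hi => div_nonneg (hq i hi) (hp i hi).le) hα
  have hmean : ∑ i ∈ s, p i / σ * (q i / p i) = (∑ i ∈ s, q i) / σ := by
    rw [sum_div]
    refine sum_congr rfl fun i hi => ?_
    field_simp [(hp i hi).ne']
  have hpow : ∀ i ∈ s, p i / σ * (q i / p i) ^ α = q i ^ α * p i ^ (1 - α) / σ := by
    intro i hi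
    rw [div_rpow (hq i hi) (hp i hi).le, rpow_sub (hp i hi), rpow_one]
    field_simp [(rpow_pos_of_pos (hp i hi) α).ne']
  rw [hmean, sum_congr rfl hpow, ← sum_div, div_rpow (sum_nonneg hq) hσ.le,
    div_le_div_iff₀ (rpow_pos_of_pos hσ α) hσ] at jensen
  rw [rpow_sub hσ, rpow_one, mul_div_assoc']
  exact (div_le_iff₀ (rpow_pos_of_pos hσ α)).2 (by linarith)

lemma rpow_add_mul_rpow_add_le {α : ℝ} (hα : 1 ≤ α) {a b c d : ℝ} (ha : 0 ≤ a) (hb : 0 ≤ b)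
    (hc : 0 < c) (hd : 0 ≤ d) (hbd : d = 0 → b = 0) :
    (a + b) ^ α * (c + d) ^ (1 - α) ≤ a ^ α * c ^ (1 - α) + b ^ α * d ^ (1 - α) := by
  rcases hd.eq_or_lt with rfl | hd
  · simp [hbd rfl, zero_rpow (by positivity : α ≠ 0)]
  simpa [Fin.sum_univ_two] using rpow_sum_mul_rpow_sum_le hα univ (q := ![a, b]) (p := ![c, d])
    (fun i _ => by fin_cases i <;> simpa) (fun i _ => by fin_cases i <;> simpa)

lemma rpow_add_div_two_mul_add_le {α : ℝ} (hα : 1 ≤ α) {u v A B : ℝ} (hu : 0 ≤ u) (huv : u ≤ v)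
    (hA : 0 ≤ A) (hAB : A ≤ B) :
    ((u + v) / 2) ^ α * (A + B) ≤ u ^ α * A + v ^ α * B := by
  have hv : 0 ≤ v := hu.trans huv
  have hconv : ((u + v) / 2) ^ α ≤ (u ^ α + v ^ α) / 2 := by
    have := (convexOn_rpow hα).2 hu hv (by norm_num : (0 : ℝ) ≤ 1 / 2)
      (by norm_num : (0 : ℝ) ≤ 1 / 2) (by norm_num)
    simp only [smul_eq_mul] at this
    rw [show (u + v) / 2 = 1 / 2 * u + 1 / 2 * v by ring]
    linarith
  have hcheb : (u ^ α + v ^ α) * (A + B) ≤ 2 * (u ^ α * A + v ^ α * B) := by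
    nlinarith [mul_nonneg (sub_nonneg.2 (rpow_le_rpow hu huv (by linarith : (0 : ℝ) ≤ α))) (sub_nonneg.2 hAB)]
  nlinarith [mul_le_mul_of_nonneg_right hconv (add_nonneg hA (hA.trans hAB))]

lemma rpow_add_mul_two_mul_powerMean_le {α : ℝ} (hα : 1 < α) {u v x y : ℝ} (hu : 0 ≤ u)
    (huv : u ≤ v) (hy : 0 < y) (hyx : y ≤ x) :
    (u + v) ^ α * (2 * ((x ^ (1 - α) + y ^ (1 - α)) / 2) ^ (1 / (1 - α))) ^ (1 - α) ≤
      u ^ α * x ^ (1 - α) + v ^ α * y ^ (1 - α) := by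
  have hmean : 0 ≤ (x ^ (1 - α) + y ^ (1 - α)) / 2 := by
    have := rpow_pos_of_pos hy (1 - α); have := rpow_pos_of_pos (hy.trans_le hyx) (1 - α)
    positivity
  have hpow : (u + v) ^ α * (2 * ((x ^ (1 - α) + y ^ (1 - α)) / 2) ^ (1 / (1 - α))) ^ (1 - α) =
      ((u + v) / 2) ^ α * (x ^ (1 - α) + y ^ (1 - α)) := by
    rw [mul_rpow zero_le_two (rpow_nonneg hmean _), ← rpow_mul hmean,
      one_div_mul_cancel (by linarith), rpow_one, div_rpow (by linarith) zero_le_two,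
      rpow_sub two_pos, rpow_one]
    field_simp [(rpow_pos_of_pos two_pos α).ne']
  rw [hpow]
  exact rpow_add_div_two_mul_add_le hα.le hu huv (rpow_nonneg (hy.le.trans hyx) _)
    (rpow_le_rpow_of_nonpos hy hyx (by linarith))

lemma sum_comp_swap_mul {ι R : Type*} [Fintype ι] [DecidableEq ι] [CommRing R] (a b : ι → R)
    (i j : ι) :
    ∑ x, a (Equiv.swap i j x) * b x = ∑ x, a x * b x - (a j - a i) * (b j - b i) := by
  rcases eq_or_ne i j with rfl | hij
  · simp
  have h : ∑ x, (a (Equiv.swap i j x) * b x - a x * b x) = -((a j - a i) * (b j - b i)) := by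
    rw [Fintype.sum_eq_add i j hij fun x hx => by
      rw [Equiv.swap_apply_of_ne_of_ne hx.1 hx.2, sub_self]]
    simp only [Equiv.swap_apply_left, Equiv.swap_apply_right]
    ring
  rw [sum_sub_distrib] at h
  linear_combination h

lemma sum_rpow_mul_rpow_comp_swap_le {ι : Type*} [Fintype ι] [DecidableEq ι] {α : ℝ}
    (hα : 1 ≤ α) {P Q : ι → ℝ} {i j : ι} (hPj : 0 < P j) (hPji : P j ≤ P i) (hQi : 0 ≤ Q i)
    (hQij : Q i ≤ Q j) :
    ∑ x, Q (Equiv.swap i j x) ^ α * P x ^ (1 - α) ≤ ∑ x, Q x ^ α * P x ^ (1 - α) := by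
  rw [sum_comp_swap_mul (fun x => Q x ^ α) (fun x => P x ^ (1 - α))]
  exact sub_le_self _ <| mul_nonneg
    (sub_nonneg.2 (rpow_le_rpow hQi hQij (by linarith)))
    (sub_nonneg.2 (rpow_le_rpow_of_nonpos hPj hPji (by linarith)))

lemma rpow_one_sub_le_sum_rpow_mul_rpow {ι : Type*} [Fintype ι] [DecidableEq ι] {α : ℝ}
    (hα : 1 < α) {P Q : ι → ℝ} (hP : ∀ x, 0 < P x) (hPsum : ∑ x, P x = 1) (hQ : ∀ x, 0 ≤ Q x)
    (hQsum : ∑ x, Q x = 1) {i j : ι} (hij : i ≠ j) (hPji : P j ≤ P i) (hQij : Q i ≤ Q j) :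
    (1 - P i - P j + 2 * ((P i ^ (1 - α) + P j ^ (1 - α)) / 2) ^ (1 / (1 - α))) ^ (1 - α) ≤
      ∑ x, Q x ^ α * P x ^ (1 - α) := by
  set M := ((P i ^ (1 - α) + P j ^ (1 - α)) / 2) ^ (1 / (1 - α))
  have hM : 0 < M := by have := hP i; have := hP j; positivity
  set s : Finset ι := {i, j}ᶜ
  have hsplit (f : ι → ℝ) : ∑ x, f x = f i + f j + ∑ x ∈ s, f x := by
    rw [← sum_add_sum_compl {i, j} f, sum_pair hij]
  have hPs : ∑ x ∈ s, P x = 1 - P i - P j := by linarith [hsplit P]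
  have hQs : Q i + Q j + ∑ x ∈ s, Q x = 1 := by linarith [hsplit Q]
  have hQs_eq_zero : ∑ x ∈ s, P x = 0 → ∑ x ∈ s, Q x = 0 := fun h =>
    sum_eq_zero fun x hx =>
      absurd ((sum_eq_zero_iff_of_nonneg fun x _ => (hP x).le).1 h x hx) (hP x).ne'
  calc (1 - P i - P j + 2 * M) ^ (1 - α)
      = (Q i + Q j + ∑ x ∈ s, Q x) ^ α * (2 * M + ∑ x ∈ s, P x) ^ (1 - α) := by
        rw [hQs, one_rpow, one_mul, hPs, add_comm]
    _ ≤ (Q i + Q j) ^ α * (2 * M) ^ (1 - α) + (∑ x ∈ s, Q x) ^ α * (∑ x ∈ s, P x) ^ (1 - α) :=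
        rpow_add_mul_rpow_add_le hα.le (add_nonneg (hQ i) (hQ j)) (sum_nonneg fun x _ => hQ x)
          (by positivity) (sum_nonneg fun x _ => (hP x).le) hQs_eq_zero
    _ ≤ Q i ^ α * P i ^ (1 - α) + Q j ^ α * P j ^ (1 - α) + ∑ x ∈ s, Q x ^ α * P x ^ (1 - α) :=
        add_le_add (rpow_add_mul_two_mul_powerMean_le hα (hQ i) hQij (hP j) hPji)
          (rpow_sum_mul_rpow_sum_le hα.le s (fun x _ => hQ x) fun x _ => hP x)
    _ = ∑ x, Q x ^ α * P x ^ (1 - α) := (hsplit fun x => Q x ^ α * P x ^ (1 - α)).symm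

lemma neg_log_le_of_rpow_one_sub_le {α c S : ℝ} (hα : 1 < α) (hc : 0 < c)
    (h : c ^ (1 - α) ≤ S) : -log c ≤ 1 / (α - 1) * log S := by
  have hlog := log_le_log (rpow_pos_of_pos hc _) h
  rw [log_rpow hc] at hlog
  rw [one_div, ← div_eq_inv_mul, le_div_iff₀ (by linarith)]
  linarith

/-- Rényi divergence lower bound when the argmax of `Q` differs from that of `P`. -/
theorem renyi_lower_bound (k : ℕ) (α : ℝ) (hα : 1 < α) (P Q : Fin (k + 2) → ℝ)
    (hPpos : ∀ i, 0 < P i) (hPsum : ∑ i, P i = 1)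
    (hQnn : ∀ i, 0 ≤ Q i) (hQsum : ∑ i, Q i = 1)
    (hPmono : ∀ i j : Fin (k + 2), i ≤ j → P j ≤ P i)
    (hmax : ∃ j : Fin (k + 2), j ≠ 0 ∧ Q 0 ≤ Q j) :
    -Real.log (1 - P 0 - P 1 +
        2 * ((P 0 ^ (1 - α) + P 1 ^ (1 - α)) / 2) ^ (1 / (1 - α))) ≤
      (1 / (α - 1)) * Real.log (∑ i, Q i ^ α * P i ^ (1 - α)) := by
  obtain ⟨j, hj0, hQ0j⟩ := hmax
  have h01 : (0 : Fin (k + 2)) ≠ 1 := by simp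
  have hP10 : P 1 ≤ P 0 := hPmono 0 1 (Fin.zero_le 1)
  refine neg_log_le_of_rpow_one_sub_le hα ?_ ?_
  · have hP01 : P 0 + P 1 ≤ 1 :=
      hPsum ▸ add_le_sum (fun i _ => (hPpos i).le) (mem_univ _) (mem_univ _) h01
    have := hPpos 0; have := hPpos 1
    have : 0 < ((P 0 ^ (1 - α) + P 1 ^ (1 - α)) / 2) ^ (1 / (1 - α)) := by positivity
    linarith
  by_cases hQ01 : Q 0 ≤ Q 1
  · exact rpow_one_sub_le_sum_rpow_mul_rpow hα hPpos hPsum hQnn hQsum h01 hP10 hQ01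
  -- otherwise `Q 1 < Q 0 ≤ Q j`, and moving `Q j` to position `1` only lowers the sum
  have hQ1j : Q 1 ≤ Q j := (not_le.1 hQ01).le.trans hQ0j
  have hPj1 : P j ≤ P 1 := hPmono 1 j (Fin.one_le_of_ne_zero hj0)
  have hswap0 : Equiv.swap 1 j 0 = 0 := Equiv.swap_apply_of_ne_of_ne h01 hj0.symm
  refine (rpow_one_sub_le_sum_rpow_mul_rpow hα hPpos hPsum (fun x => hQnn (Equiv.swap 1 j x))
    ((Equiv.sum_comp _ Q).trans hQsum) h01 hP10 ?_).trans
    (sum_rpow_mul_rpow_comp_swap_le hα.le (hPpos j) hPj1 (hQnn 1) hQ1j)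
  rwa [hswap0, Equiv.swap_apply_left]
end

section
/- For every p_1 ∈ (1/2, 1): (1 + 2√(p_1(1-p_1)))^4 > 2^6 · p_1 (1 - p_1). This implies the chi-squared-based certified radius √(σ² log(1/(4p_1(1-p_1)))) exceeds the Hellinger-based certified radius √(-8σ² log(√((1 + 2√(p_1(1-p_1)))/2))) for binary distributions. -/
/-- For `p₁ ∈ (1/2, 1)`: `(1 + 2√(p₁(1-p₁)))⁴ > 2⁶ p₁ (1-p₁)`. -/
theorem chi_sq_gt_hellinger (p₁ : ℝ) (h₁ : 1 / 2 < p₁) (h₂ : p₁ < 1) :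
    (1 + 2 * Real.sqrt (p₁ * (1 - p₁))) ^ 4 > 2 ^ 6 * p₁ * (1 - p₁) := by
  set t := Real.sqrt (p₁ * (1 - p₁)) with ht
  have hpos : 0 < p₁ * (1 - p₁) := by nlinarith
  have ht2 : t ^ 2 = p₁ * (1 - p₁) := Real.sq_sqrt hpos.le
  have ht0 : 0 < t := Real.sqrt_pos.mpr hpos
  have htlt : t < 1 / 2 := by
    nlinarith [ht2, Real.sqrt_nonneg (p₁ * (1 - p₁))]
  nlinarith [sq_nonneg (1 - 2 * t), sq_nonneg ((1 - 2 * t) * (1 + 2 * t)), ht0, htlt]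
end

section
/- For every p_1 ∈ (1/2, 1) and α = 1.1 (more generally some fixed α > 1): 4·((p_1^{1-α} + (1-p_1)^{1-α})/2)^{2/(1-α)} < (4 p_1 (1-p_1))^α. Hence the binary Rényi-divergence certified radius √(-(2σ²/α) log(2((p_1^{1-α} + (1-p_1)^{1-α})/2)^{1/(1-α)})) exceeds the chi-squared certified radius √(σ² log(1/(4 p_1 (1-p_1)))). -/
set_option maxHeartbeats 2000000 in
theorem key_poly (x y : ℝ) (hy : 0 < y) (hxy : y < x) :
    2^99*(x*y)^45*(x^10+y^10) < (x+y)^100 := by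
  have hx : 0 < x := hy.trans hxy
  have h4 : (0:ℝ) < (x-y)^4 := pow_pos (sub_pos.mpr hxy) 4
  have hQ : (0:ℝ) < 1*y^96 + 104*x^1*y^95 + 5360*x^2*y^94 + 182520*x^3*y^93 + 4619560*x^4*y^92 + 92691976*x^5*y^91 + 1535827664*x^6*y^90 + 21613015320*x^7*y^89 + 263691137940*x^8*y^88 + 2833368886920*x^9*y^87 + 27146554410096*x^10*y^86 + 234248960498904*x^11*y^85 + 1835607351051480*x^12*y^84 + 13153230989765160*x^13*y^83 + 86696071817660880*x^14*y^82 + 528311553125748216*x^15*y^81 + 2989707727251851394*x^16*y^80 + 15772727519470996440*x^17*y^79 + 77843724658046417680*x^18*y^78 + 360510625810453616840*x^19*y^77 + 1571064728047977778616*x^20*y^76 + 6458638739504036213304*x^21*y^75 + 25104432253489702500400*x^22*y^74 + 92454915169570710610600*x^23*y^73 + 323232632953213163269700*x^24*y^72 + 1074679400790220284219000*x^25*y^71 + 3403611850367367761667600*x^26*y^70 + 10284199814151874334588200*x^27*y^69 + 29689426826645685267158600*x^28*y^68 + 82003124234299032368893400*x^29*y^67 + 216981463205173092273270960*x^30*y^66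 + 550705253214192465409816840*x^31*y^65 + 1342267805085456009768283375*x^32*y^64 + 3145454856665603477704950800*x^33*y^63 + 7094769575522164031063080800*x^34*y^62 + 15419782282410629718147100080*x^35*y^61 + 32327267880231425576705205520*x^36*y^60 + 65444030819378914788388331600*x^37*y^59 + 128066924536882147457633530400*x^38*y^58 + 242506726499804804181512194800*x^39*y^57 + 444820448321013377058363087400*x^40*y^56 + 791181541826744326237160146000*x^41*y^55 + 1366022267714396686033245768800*x^42*y^54 + 2291891419577356218707296556400*x^43*y^53 + 3740716026806082402267353871600*x^44*y^52 + 5312046289891056193569828067472*x^45*y^51 + 6678903407513573546815034553888*x^46*y^50 + 7598722065637994455704796678320*x^47*y^49 + 7922143509103728790890519469340*x^48*y^48 + 7598722065637994455704796678320*x^49*y^47 + 6678903407513573546815034553888*x^50*y^46 + 5312046289891056193569828067472*x^51*y^45 + 3740716026806082402267353871600*x^52*y^44 + 2291891419577356218707296556400*x^53*y^43 + 1366022267714396686033245768800*x^54*y^42 + 791181541826744326237160146000*x^55*y^41 + 444820448321013377058363087400*x^56*y^40 + 242506726499804804181512194800*x^57*y^39 + 128066924536882147457633530400*x^58*y^38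 + 65444030819378914788388331600*x^59*y^37 + 32327267880231425576705205520*x^60*y^36 + 15419782282410629718147100080*x^61*y^35 + 7094769575522164031063080800*x^62*y^34 + 3145454856665603477704950800*x^63*y^33 + 1342267805085456009768283375*x^64*y^32 + 550705253214192465409816840*x^65*y^31 + 216981463205173092273270960*x^66*y^30 + 82003124234299032368893400*x^67*y^29 + 29689426826645685267158600*x^68*y^28 + 10284199814151874334588200*x^69*y^27 + 3403611850367367761667600*x^70*y^26 + 1074679400790220284219000*x^71*y^25 + 323232632953213163269700*x^72*y^24 + 92454915169570710610600*x^73*y^23 + 25104432253489702500400*x^74*y^22 + 6458638739504036213304*x^75*y^21 + 1571064728047977778616*x^76*y^20 + 360510625810453616840*x^77*y^19 + 77843724658046417680*x^78*y^18 + 15772727519470996440*x^79*y^17 + 2989707727251851394*x^80*y^16 + 528311553125748216*x^81*y^15 + 86696071817660880*x^82*y^14 + 13153230989765160*x^83*y^13 + 1835607351051480*x^84*y^12 + 234248960498904*x^85*y^11 + 27146554410096*x^86*y^10 + 2833368886920*x^87*y^9 + 263691137940*x^88*y^8 + 21613015320*x^89*y^7 + 1535827664*x^90*y^6 + 92691976*x^91*y^5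 + 4619560*x^92*y^4 + 182520*x^93*y^3 + 5360*x^94*y^2 + 104*x^95*y^1 + 1*x^96 := by positivity
  have hid : (x+y)^100 - 2^99*(x*y)^45*(x^10+y^10) = (x-y)^4 * (1*y^96 + 104*x^1*y^95 + 5360*x^2*y^94 + 182520*x^3*y^93 + 4619560*x^4*y^92 + 92691976*x^5*y^91 + 1535827664*x^6*y^90 + 21613015320*x^7*y^89 + 263691137940*x^8*y^88 + 2833368886920*x^9*y^87 + 27146554410096*x^10*y^86 + 234248960498904*x^11*y^85 + 1835607351051480*x^12*y^84 + 13153230989765160*x^13*y^83 + 86696071817660880*x^14*y^82 + 528311553125748216*x^15*y^81 + 2989707727251851394*x^16*y^80 + 15772727519470996440*x^17*y^79 + 77843724658046417680*x^18*y^78 + 360510625810453616840*x^19*y^77 + 1571064728047977778616*x^20*y^76 + 6458638739504036213304*x^21*y^75 + 25104432253489702500400*x^22*y^74 + 92454915169570710610600*x^23*y^73 + 323232632953213163269700*x^24*y^72 + 1074679400790220284219000*x^25*y^71 + 3403611850367367761667600*x^26*y^70 + 10284199814151874334588200*x^27*y^69 + 29689426826645685267158600*x^28*y^68 + 82003124234299032368893400*x^29*y^67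 + 216981463205173092273270960*x^30*y^66 + 550705253214192465409816840*x^31*y^65 + 1342267805085456009768283375*x^32*y^64 + 3145454856665603477704950800*x^33*y^63 + 7094769575522164031063080800*x^34*y^62 + 15419782282410629718147100080*x^35*y^61 + 32327267880231425576705205520*x^36*y^60 + 65444030819378914788388331600*x^37*y^59 + 128066924536882147457633530400*x^38*y^58 + 242506726499804804181512194800*x^39*y^57 + 444820448321013377058363087400*x^40*y^56 + 791181541826744326237160146000*x^41*y^55 + 1366022267714396686033245768800*x^42*y^54 + 2291891419577356218707296556400*x^43*y^53 + 3740716026806082402267353871600*x^44*y^52 + 5312046289891056193569828067472*x^45*y^51 + 6678903407513573546815034553888*x^46*y^50 + 7598722065637994455704796678320*x^47*y^49 + 7922143509103728790890519469340*x^48*y^48 + 7598722065637994455704796678320*x^49*y^47 + 6678903407513573546815034553888*x^50*y^46 + 5312046289891056193569828067472*x^51*y^45 + 3740716026806082402267353871600*x^52*y^44 + 2291891419577356218707296556400*x^53*y^43 + 1366022267714396686033245768800*x^54*y^42 + 791181541826744326237160146000*x^55*y^41 + 444820448321013377058363087400*x^56*y^40 + 242506726499804804181512194800*x^57*y^39 +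 128066924536882147457633530400*x^58*y^38 + 65444030819378914788388331600*x^59*y^37 + 32327267880231425576705205520*x^60*y^36 + 15419782282410629718147100080*x^61*y^35 + 7094769575522164031063080800*x^62*y^34 + 3145454856665603477704950800*x^63*y^33 + 1342267805085456009768283375*x^64*y^32 + 550705253214192465409816840*x^65*y^31 + 216981463205173092273270960*x^66*y^30 + 82003124234299032368893400*x^67*y^29 + 29689426826645685267158600*x^68*y^28 + 10284199814151874334588200*x^69*y^27 + 3403611850367367761667600*x^70*y^26 + 1074679400790220284219000*x^71*y^25 + 323232632953213163269700*x^72*y^24 + 92454915169570710610600*x^73*y^23 + 25104432253489702500400*x^74*y^22 + 6458638739504036213304*x^75*y^21 + 1571064728047977778616*x^76*y^20 + 360510625810453616840*x^77*y^19 + 77843724658046417680*x^78*y^18 + 15772727519470996440*x^79*y^17 + 2989707727251851394*x^80*y^16 + 528311553125748216*x^81*y^15 + 86696071817660880*x^82*y^14 + 13153230989765160*x^83*y^13 + 1835607351051480*x^84*y^12 + 234248960498904*x^85*y^11 + 27146554410096*x^86*y^10 + 2833368886920*x^87*y^9 + 263691137940*x^88*y^8 + 21613015320*x^89*y^7 +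 1535827664*x^90*y^6 + 92691976*x^91*y^5 + 4619560*x^92*y^4 + 182520*x^93*y^3 + 5360*x^94*y^2 + 104*x^95*y^1 + 1*x^96) := by ring
  linarith [mul_pos h4 hQ]

/-- For `p₁ ∈ (1/2, 1)` and `α = 1.1`:
`4 ((p₁^{1-α} + (1-p₁)^{1-α})/2)^{2/(1-α)} < (4 p₁ (1-p₁))^α`,
so the Rényi certified radius exceeds the chi-squared one. -/
theorem renyi_gt_chi_sq (p₁ : ℝ) (h₁ : 1 / 2 < p₁) (h₂ : p₁ < 1) (α : ℝ)
    (hα : α = 1.1) :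
    4 * ((p₁ ^ (1 - α) + (1 - p₁) ^ (1 - α)) / 2) ^ (2 / (1 - α)) <
      (4 * p₁ * (1 - p₁)) ^ α := by
  subst hα
  have hp : (0:ℝ) < p₁ := by linarith
  have hq : (0:ℝ) < 1 - p₁ := by linarith
  have hlt : 1 - p₁ < p₁ := by linarith
  set x := p₁ ^ ((1:ℝ)/10) with hxdef
  set y := (1-p₁) ^ ((1:ℝ)/10) with hydef
  have hx0 : 0 < x := Real.rpow_pos_of_pos hp _
  have hy0 : 0 < y := Real.rpow_pos_of_pos hq _
  have hyx : y < x := Real.rpow_lt_rpow hq.le hlt (by norm_num)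
  have hx10 : x ^ (10:ℕ) = p₁ := by
    rw [hxdef, ← Real.rpow_natCast (p₁ ^ ((1:ℝ)/10)) 10, ← Real.rpow_mul hp.le]
    norm_num
  have hy10 : y ^ (10:ℕ) = 1 - p₁ := by
    rw [hydef, ← Real.rpow_natCast ((1-p₁) ^ ((1:ℝ)/10)) 10, ← Real.rpow_mul hq.le]
    norm_num
  have hsum : x ^ (10:ℕ) + y ^ (10:ℕ) = 1 := by rw [hx10, hy10]; ring
  set c := (4:ℝ) ^ ((1:ℝ)/10) with hcdef
  have hc0 : 0 < c := Real.rpow_pos_of_pos (by norm_num) _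
  have hc10 : c ^ (10:ℕ) = 4 := by
    rw [hcdef, ← Real.rpow_natCast ((4:ℝ) ^ ((1:ℝ)/10)) 10, ← Real.rpow_mul (by norm_num : (0:ℝ) ≤ 4)]
    norm_num
  have hc5 : c ^ (5:ℕ) = 2 := by
    rw [hcdef, ← Real.rpow_natCast ((4:ℝ) ^ ((1:ℝ)/10)) 5, ← Real.rpow_mul (by norm_num : (0:ℝ) ≤ 4)]
    rw [show ((1:ℝ)/10 * (5:ℕ)) = 1/2 by norm_num]
    rw [show (4:ℝ) = 2 ^ ((2:ℕ):ℝ) by norm_num, ← Real.rpow_mul (by norm_num : (0:ℝ) ≤ 2)]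
    norm_num
  -- rewrite exponents
  rw [show (2:ℝ)/(1 - 1.1) = -20 by norm_num, show (1:ℝ) - 1.1 = -(1/10) by norm_num]
  rw [Real.rpow_neg hp.le, Real.rpow_neg hq.le]
  have hB : (0:ℝ) < 4 * p₁ * (1 - p₁) := by positivity
  have hmid : (0:ℝ) < (x⁻¹ + y⁻¹)/2 := by positivity
  rw [Real.rpow_neg hmid.le]
  rw [show ((x⁻¹ + y⁻¹)/2) ^ (20:ℝ) = ((x⁻¹ + y⁻¹)/2) ^ (20:ℕ) by
    rw [← Real.rpow_natCast ((x⁻¹ + y⁻¹)/2) 20]; norm_num]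
  have eR : (4 * p₁ * (1 - p₁)) ^ (1.1:ℝ) = (c*x*y) ^ (11:ℕ) := by
    rw [show (4 * p₁ * (1 - p₁)) ^ (1.1:ℝ)
          = ((4 * p₁ * (1 - p₁)) ^ ((1:ℝ)/10)) ^ (11:ℕ) by
      rw [← Real.rpow_natCast ((4 * p₁ * (1 - p₁)) ^ ((1:ℝ)/10)) 11,
        ← Real.rpow_mul hB.le]
      norm_num]
    congr 1
    rw [Real.mul_rpow (by positivity) hq.le, Real.mul_rpow (by norm_num) hp.le]
  rw [eR]
  -- now pure algebra
  have key := key_poly x y hy0 hyx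
  rw [hsum, mul_one] at key
  -- key : 2^99*(x*y)^45 < (x+y)^100
  have step2 : 2^20*(x*y)^9 < c*(x+y)^20 := by
    have h5 : (2^20*(x*y)^9)^(5:ℕ) < (c*(x+y)^20)^(5:ℕ) := by
      have e : (c*(x+y)^20)^(5:ℕ) = 2*(x+y)^100 := by
        rw [mul_pow, hc5, ← pow_mul]
      have e' : (2^20*(x*y)^9)^(5:ℕ) = 2*(2^99*(x*y)^45) := by ring
      rw [e, e']
      linarith
    exact lt_of_pow_lt_pow_left₀ 5 (by positivity) h5
  have hc11 : c ^ (11:ℕ) = 4*c := by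
    rw [show c^(11:ℕ) = c^(10:ℕ)*c by ring, hc10]
  have hfin : 4*(2*(x*y))^20 < (c*x*y)^(11:ℕ)*(x+y)^20 := by
    have h := mul_lt_mul_of_pos_left step2 (show (0:ℝ) < 4*(x*y)^11 by positivity)
    calc 4*(2*(x*y))^20 = 4*(x*y)^11 * (2^20*(x*y)^9) := by ring
      _ < 4*(x*y)^11 * (c*(x+y)^20) := h
      _ = (c*x*y)^(11:ℕ)*(x+y)^20 := by
          rw [show (c*x*y)^(11:ℕ) = c^(11:ℕ)*(x*y)^11 by ring, hc11]; ring
  have hinv : (((x⁻¹ + y⁻¹)/2) ^ (20:ℕ))⁻¹ = (2*(x*y))^20 / (x+y)^20 := by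
    rw [show (x⁻¹ + y⁻¹)/2 = (x+y)/(2*(x*y)) by field_simp; ring]
    rw [div_pow, inv_div]
  rw [hinv]
  rw [show 4*((2*(x*y))^20/(x+y)^20) = (4*(2*(x*y))^20)/(x+y)^20 by ring]
  rw [div_lt_iff₀ (by positivity : (0:ℝ) < (x+y)^20)]
  exact hfin
end

section
/- For probability vectors P, Q on {1,...,k} with p_i > 0 and p_1 ≥ ... ≥ p_k, the minimum of the KL divergence ∑ q_i log(q_i/p_i) over all Q with q_1 = q_2 ≥ q_3 ≥ ... ≥ q_k is attained at q_1 = q_2 = √(p_1 p_2)/η and q_i = p_i/η for i ≥ 3, where η = 2√(p_1 p_2) + 1 - p_1 - p_2, and the minimum value is -log η. -/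
/-!
Splitting `log (q_i / p_i) = log (q_i / q*_i) + log (q*_i / p_i)` writes `KL(Q, P)` as
`KL(Q, Q*)` plus a cross term. Since `√(p₁p₂)² = p₁p₂`, the ratios `q*_i / p_i` are `1/η` for
`i ≥ 3` and have product `1/η²` for `i = 1, 2`, so the cross term equals `-log η` for every
feasible `Q` (this uses `q₁ = q₂`), including `Q*` itself. Gibbs' inequality `KL(Q, Q*) ≥ 0`
finishes the proof.
-/

open Real Finset

lemma Real.sub_le_mul_log_div {q r : ℝ} (hq : 0 ≤ q) (hr : 0 < r) : q - r ≤ q * log (q / r) := by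
  have h := mul_nonneg hr.le (InformationTheory.klFun_nonneg (div_nonneg hq hr.le))
  rw [InformationTheory.klFun_apply] at h
  have hexp : r * (q / r * log (q / r) + 1 - q / r) = q * log (q / r) + r - q := by
    field_simp
  linarith

lemma Real.sum_mul_log_div_nonneg {ι : Type*} [Fintype ι] {q r : ι → ℝ} (hq : ∀ i, 0 ≤ q i)
    (hr : ∀ i, 0 < r i) (hqs : ∑ i, q i = 1) (hrs : ∑ i, r i = 1) :
    0 ≤ ∑ i, q i * log (q i / r i) := by
  have h := sum_le_sum fun i (_ : i ∈ univ) => Real.sub_le_mul_log_div (hq i) (hr i)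
  rwa [sum_sub_distrib, hqs, hrs, sub_self] at h

lemma Real.mul_log_div_eq_add {q r p : ℝ} (hr : 0 < r) (hp : 0 < p) :
    q * log (q / p) = q * log (q / r) + q * log (r / p) := by
  rcases eq_or_ne q 0 with rfl | hq
  · simp
  rw [← mul_add, ← log_mul (by positivity) (by positivity), div_mul_div_cancel₀ hr.ne']

lemma Fin.sum_univ_eq_zero_add_one_add {M : Type*} [AddCommMonoid M] {k : ℕ}
    (f : Fin (k + 2) → M) : ∑ i, f i = f 0 + f 1 + ∑ i : Fin k, f i.succ.succ := by
  rw [Fin.sum_univ_succ, Fin.sum_univ_succ, Fin.succ_zero_eq_one, ← add_assoc]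

lemma Fin.sum_mul_eq_mul_sum_of_pair {k : ℕ} {f g : Fin (k + 2) → ℝ} {c : ℝ} (hf : f 0 = f 1)
    (hg₀₁ : g 0 + g 1 = 2 * c) (hg : ∀ i : Fin k, g i.succ.succ = c) :
    ∑ i, f i * g i = c * ∑ i, f i := by
  simp only [Fin.sum_univ_eq_zero_add_one_add, hg, ← sum_mul, ← hf]
  linear_combination f 0 * hg₀₁

lemma Real.log_sqrt_mul_div_div_add {a b η : ℝ} (ha : 0 < a) (hb : 0 < b) (hη : 0 < η) :
    log (√(a * b) / η / a) + log (√(a * b) / η / b) = 2 * -log η := by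
  have hprod : √(a * b) / η / a * (√(a * b) / η / b) = η⁻¹ ^ 2 := by
    field_simp
    rw [Real.sq_sqrt (by positivity)]
  rw [← log_mul (by positivity) (by positivity), hprod, log_pow, log_inv, Nat.cast_ofNat]

noncomputable def klMinimizer {k : ℕ} (P : Fin (k + 2) → ℝ) (η : ℝ) : Fin (k + 2) → ℝ :=
  fun i => if i = 0 ∨ i = 1 then √(P 0 * P 1) / η else P i / η

namespace klMinimizer

variable {k : ℕ} {P : Fin (k + 2) → ℝ} {η : ℝ}

@[simp]
lemma apply_zero : klMinimizer P η 0 = √(P 0 * P 1) / η := by simp [klMinimizer]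

@[simp]
lemma apply_one : klMinimizer P η 1 = √(P 0 * P 1) / η := by simp [klMinimizer]

@[simp]
lemma apply_succ_succ (i : Fin k) : klMinimizer P η i.succ.succ = P i.succ.succ / η := by
  refine if_neg ?_
  rw [← Fin.succ_zero_eq_one, Fin.succ_inj]
  exact not_or.mpr ⟨Fin.succ_ne_zero _, Fin.succ_ne_zero _⟩

lemma pos (hPpos : ∀ i, 0 < P i) (hη : 0 < η) (i : Fin (k + 2)) : 0 < klMinimizer P η i := by
  unfold klMinimizer
  split_ifs
  exacts [div_pos (Real.sqrt_pos.mpr (mul_pos (hPpos 0) (hPpos 1))) hη, div_pos (hPpos i) hη]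

lemma sum_eq :
    ∑ i, klMinimizer P η i = (2 * √(P 0 * P 1) + ∑ i, P i - P 0 - P 1) / η := by
  simp only [Fin.sum_univ_eq_zero_add_one_add, apply_zero, apply_one, apply_succ_succ, ← sum_div]
  ring

lemma le_apply_zero (hPpos : ∀ i, 0 < P i) (hPmono : ∀ i j : Fin (k + 2), i ≤ j → P j ≤ P i)
    (hη : 0 ≤ η) (i : Fin (k + 2)) : klMinimizer P η i ≤ klMinimizer P η 0 := by
  have hP1 : P 1 ≤ √(P 0 * P 1) :=
    (Real.le_sqrt' (hPpos 1)).mpr (by nlinarith [hPmono 0 1 (Fin.zero_le 1), hPpos 1])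
  rw [apply_zero, klMinimizer]
  split_ifs with h
  · rfl
  · rw [not_or] at h
    exact div_le_div_of_nonneg_right ((hPmono 1 i (Fin.one_le_of_ne_zero h.1)).trans hP1) hη

lemma sum_mul_log_div (hPpos : ∀ i, 0 < P i) (hη : 0 < η) {Q : Fin (k + 2) → ℝ}
    (hQ : Q 0 = Q 1) : ∑ i, Q i * log (klMinimizer P η i / P i) = -log η * ∑ i, Q i := by
  refine Fin.sum_mul_eq_mul_sum_of_pair hQ ?_ fun i => ?_
  · rw [apply_zero, apply_one]
    exact Real.log_sqrt_mul_div_div_add (hPpos 0) (hPpos 1) hη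
  · rw [apply_succ_succ, div_div_cancel_left' (hPpos _).ne', log_inv]

end klMinimizer

/-- The minimizer of the KL divergence over probability vectors `Q` with
`q₁ = q₂` and `q_i ≤ q₁` is `q₁ = q₂ = √(p₁p₂)/η`, `q_i = p_i/η` for `i ≥ 3`,
where `η = 2√(p₁p₂) + 1 - p₁ - p₂`, with minimum value `-log η`. -/
theorem kl_minimizer (k : ℕ) (P : Fin (k + 2) → ℝ)
    (hPpos : ∀ i, 0 < P i) (hPsum : ∑ i, P i = 1)
    (hPmono : ∀ i j : Fin (k + 2), i ≤ j → P j ≤ P i)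
    (η : ℝ) (hη : η = 2 * Real.sqrt (P 0 * P 1) + 1 - P 0 - P 1)
    (Qstar : Fin (k + 2) → ℝ)
    (hQstar : Qstar = fun i =>
      if i = 0 ∨ i = 1 then Real.sqrt (P 0 * P 1) / η else P i / η) :
    ((∀ i, 0 ≤ Qstar i) ∧ (∑ i, Qstar i) = 1 ∧ Qstar 0 = Qstar 1 ∧
        (∀ i, Qstar i ≤ Qstar 0)) ∧
      (∑ i, Qstar i * Real.log (Qstar i / P i)) = -Real.log η ∧
      (∀ Q : Fin (k + 2) → ℝ, (∀ i, 0 ≤ Q i) → (∑ i, Q i) = 1 → Q 0 = Q 1 →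
        (∀ i, Q i ≤ Q 0) →
        -Real.log η ≤ ∑ i, Q i * Real.log (Q i / P i)) := by
  obtain rfl : Qstar = klMinimizer P η := hQstar
  have hηpos : 0 < η := by
    have hPtail : 0 ≤ ∑ i : Fin k, P i.succ.succ := sum_nonneg fun i _ => (hPpos _).le
    rw [Fin.sum_univ_eq_zero_add_one_add] at hPsum
    have hs : 0 < √(P 0 * P 1) := Real.sqrt_pos.mpr (mul_pos (hPpos 0) (hPpos 1))
    linarith
  have hsum : ∑ i, klMinimizer P η i = 1 := by
    rw [klMinimizer.sum_eq, hPsum, ← hη, div_self hηpos.ne']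
  have hsymm : klMinimizer P η 0 = klMinimizer P η 1 := by simp
  refine ⟨⟨fun i => (klMinimizer.pos hPpos hηpos i).le, hsum, hsymm,
      klMinimizer.le_apply_zero hPpos hPmono hηpos.le⟩, ?_, fun Q hQnonneg hQsum hQ01 _ => ?_⟩
  · rw [klMinimizer.sum_mul_log_div hPpos hηpos hsymm, hsum, mul_one]
  · rw [sum_congr rfl fun i _ => Real.mul_log_div_eq_add (klMinimizer.pos hPpos hηpos i) (hPpos i),
      sum_add_distrib, klMinimizer.sum_mul_log_div hPpos hηpos hQ01, hQsum, mul_one]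
    linarith [Real.sum_mul_log_div_nonneg hQnonneg (klMinimizer.pos hPpos hηpos) hQsum hsum]
end

section
/- For any p_1 ∈ (1/2, 1) and any β ∈ (0, min(1, (1/2) log(p_1/(1-p_1)))]: β² + 2 log(1.25(1+e^β)/(p_1(1+e^{2β}) - e^{2β})) · log(2√(p_1(1-p_1))) < 0, provided p_1(1+e^{2β}) - e^{2β} > 0. -/
open Real

lemma aux_exp_div_lt {a b : ℕ} {r : ℝ} (ha : a ≠ 0) (hb : b ≠ 0) (hr : 0 < r)
    (h : (2.7182818286:ℝ)^a < r^b) : Real.exp ((a:ℝ)/b) < r := by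
  have h1 : Real.exp ((a:ℝ)) < (2.7182818286:ℝ)^a := by
    have he : Real.exp ((a:ℝ)) = Real.exp 1 ^ a := by
      rw [← Real.exp_nat_mul]; norm_num
    rw [he]
    exact pow_lt_pow_left₀ Real.exp_one_lt_d9 (Real.exp_pos 1).le ha
  have h2 : Real.exp ((a:ℝ)/b) ^ b = Real.exp ((a:ℝ)) := by
    rw [← Real.exp_nat_mul]
    congr 1
    field_simp
  have h3 : Real.exp ((a:ℝ)/b) ^ b < r ^ b := by
    rw [h2]; exact h1.trans h
  exact lt_of_pow_lt_pow_left₀ b hr.le h3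

lemma aux_lt_exp_div {a b : ℕ} {r : ℝ} (hb : b ≠ 0)
    (h : r^b < (2.7182818283:ℝ)^a) : r < Real.exp ((a:ℝ)/b) := by
  have h1 : (2.7182818283:ℝ)^a ≤ Real.exp ((a:ℝ)) := by
    have he : Real.exp ((a:ℝ)) = Real.exp 1 ^ a := by
      rw [← Real.exp_nat_mul]; norm_num
    rw [he]
    exact pow_le_pow_left₀ (by norm_num) Real.exp_one_gt_d9.le a
  have h2 : Real.exp ((a:ℝ)/b) ^ b = Real.exp ((a:ℝ)) := by
    rw [← Real.exp_nat_mul]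
    congr 1
    field_simp
  have h3 : r ^ b < Real.exp ((a:ℝ)/b) ^ b := by
    rw [h2]; exact h.trans_le h1
  exact lt_of_pow_lt_pow_left₀ b (Real.exp_pos _).le h3

lemma aux_log_gt {a b : ℕ} {r : ℝ} (ha : a ≠ 0) (hb : b ≠ 0) (hr : 0 < r)
    (h : (2.7182818286:ℝ)^a < r^b) : ((a:ℝ)/b) < Real.log r :=
  (Real.lt_log_iff_exp_lt hr).mpr (aux_exp_div_lt ha hb hr h)

lemma aux_logA {x c : ℝ} {a b : ℕ} (hx0 : 0 < x) (hxc : x ≤ c)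
    (ha : a ≠ 0) (hb : b ≠ 0)
    (h : (2.7182818286:ℝ)^a < (c⁻¹)^b) : ((a:ℝ)/b) < -Real.log x := by
  have hc : 0 < c := lt_of_lt_of_le hx0 hxc
  have h1 : Real.log x ≤ Real.log c := Real.log_le_log hx0 hxc
  have h2 : ((a:ℝ)/b) < Real.log c⁻¹ := aux_log_gt ha hb (inv_pos.mpr hc) h
  rw [Real.log_inv] at h2; linarith

lemma aux_final {β L G c₁ c₂ : ℝ} (hβ1 : β ≤ 1) (hβ0 : 0 < β)
    (hc : 1 ≤ c₁*c₂) (hc₁ : 0 < c₁) (hc₂ : 0 < c₂)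
    (hA : c₁ < -G) (hL : c₂ < L) : β^2 + 2*L*(G/2) < 0 := by
  have h1 : β^2 ≤ 1 := by nlinarith
  have h2 : c₁*c₂ < (-G)*L := by
    calc c₁*c₂ < (-G)*c₂ := mul_lt_mul_of_pos_right hA hc₂
    _ ≤ (-G)*L := mul_le_mul_of_nonneg_left hL.le (by linarith)
  nlinarith [h1, h2, hc]

lemma num1 : ((33:ℝ)/7)^5 < (2.7182818283:ℝ)^8 := by norm_num
lemma num2 : (2.7182818286:ℝ)^33 < ((50:ℝ)/13)^25 := by norm_num
lemma num3 : (2.7182818286:ℝ)^6 < ((5:ℝ)/2)^7 := by norm_num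
lemma num4 : (2.7182818286:ℝ)^6 < (((0.5775:ℝ))⁻¹)^11 := by norm_num
lemma num5 : (2.7182818286:ℝ)^11 < ((13:ℝ)/4/0.504)^6 := by norm_num
lemma num6 : (2.7182818286:ℝ)^9 < (((0.5239:ℝ))⁻¹)^14 := by norm_num
lemma num7 : (2.7182818286:ℝ)^14 < ((13:ℝ)/4/0.648)^9 := by norm_num
lemma num8 : (2.7182818286:ℝ)^13 < (((0.3916:ℝ))⁻¹)^14 := by norm_num
lemma num9 : (2.7182818286:ℝ)^14 < ((13:ℝ)/4/0.808)^13 := by norm_num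

/-- `cosh β ≥ 1 + β²/2` in exponential form. -/
lemma aux_cosh_bound {β : ℝ} (hβ0 : 0 ≤ β) :
    (2 + β^2) * Real.exp β ≤ Real.exp (2*β) + 1 := by
  have hhalf : 1 + β/2 + (β/2)^2/2 ≤ Real.exp (β/2) :=
    Real.quadratic_le_exp_of_nonneg (by linarith)
  have h1 : Real.exp (-(β/2)) * (1 + β/2 + (β/2)^2/2) ≤ 1 := by
    calc Real.exp (-(β/2)) * (1 + β/2 + (β/2)^2/2)
        ≤ Real.exp (-(β/2)) * Real.exp (β/2) :=
          mul_le_mul_of_nonneg_left hhalf (Real.exp_pos _).le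
    _ = 1 := by rw [← Real.exp_add]; norm_num
  have hprod : 1 ≤ (1 - β/2 + (β/2)^2/2) * (1 + β/2 + (β/2)^2/2) := by
    nlinarith [sq_nonneg ((β/2)^2)]
  have hs1 : (0:ℝ) < 1 + β/2 + (β/2)^2/2 := by nlinarith [sq_nonneg (β/2)]
  have hFle : Real.exp (-(β/2)) ≤ 1 - β/2 + (β/2)^2/2 := by
    have h2 : Real.exp (-(β/2)) * (1 + β/2 + (β/2)^2/2)
        ≤ (1 - β/2 + (β/2)^2/2) * (1 + β/2 + (β/2)^2/2) := le_trans h1 hprod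
    exact le_of_mul_le_mul_right h2 hs1
  have hsinh : β ≤ Real.exp (β/2) - Real.exp (-(β/2)) := by linarith
  have hE2 : Real.exp (β/2) ^ 2 = Real.exp β := by
    rw [sq, ← Real.exp_add]; congr 1; ring
  have hkey : Real.exp (β/2) * (Real.exp (β/2) - Real.exp (-(β/2)))
      = Real.exp β - 1 := by
    rw [mul_sub, ← Real.exp_add, ← Real.exp_add]; norm_num
  have hexpand : (Real.exp (β/2) - Real.exp (-(β/2)))^2 * Real.exp β
      = (Real.exp β - 1)^2 := by
    calc (Real.exp (β/2) - Real.exp (-(β/2)))^2 * Real.exp β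
        = (Real.exp (β/2) * (Real.exp (β/2) - Real.exp (-(β/2))))^2 := by
          rw [← hE2]; ring
    _ = (Real.exp β - 1)^2 := by rw [hkey]
  have h1' : β^2 ≤ (Real.exp (β/2) - Real.exp (-(β/2)))^2 := by
    nlinarith [hsinh, hβ0]
  have h2 := mul_le_mul_of_nonneg_right h1' (Real.exp_pos β).le
  rw [hexpand] at h2
  have hveq : Real.exp β ^ 2 = Real.exp (2*β) := by
    rw [sq, ← Real.exp_add]; congr 1; ring
  nlinarith [h2, hveq]

/-- In the regime `β < 4/5`: `-log(4 p₁ (1-p₁)) > (25/33) β²`. -/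
lemma aux_A_bound_R1 {p₁ β : ℝ} (h₁ : 1/2 < p₁) (h₂ : p₁ < 1)
    (hβ0 : 0 < β) (hβ8 : β < 4/5)
    (hu_lt : (1-p₁)*Real.exp (2*β) < p₁) :
    β^2*(25/33) < -Real.log (4*(p₁*(1-p₁))) := by
  have hp0 : 0 < p₁ := by linarith
  have hq0 : 0 < 1 - p₁ := by linarith
  have hpq0 : 0 < p₁ * (1 - p₁) := mul_pos hp0 hq0
  have h4pq0 : 0 < 4*(p₁*(1-p₁)) := by linarith
  have hu1 : 1 < Real.exp (2*β) := by
    have := Real.add_one_le_exp (2*β); linarith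
  have hv0 : 0 < Real.exp β := Real.exp_pos β
  have hveq : Real.exp β ^ 2 = Real.exp (2*β) := by
    rw [sq, ← Real.exp_add]; congr 1; ring
  have key_poly : (p₁*(1-p₁))*(Real.exp (2*β)+1)^2 ≤ Real.exp (2*β) := by
    have f1 : 0 < p₁*Real.exp (2*β) - (1-p₁) := by nlinarith [hu1, h₁, hp0]
    have f2 : 0 < p₁ - (1-p₁)*Real.exp (2*β) := by linarith
    nlinarith [mul_pos f1 f2]
  have hcosh := aux_cosh_bound hβ0.le
  have h4pq_cosh : 4*(p₁*(1-p₁))*(1+β^2/2)^2 ≤ 1 := by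
    have h1 : (p₁*(1-p₁))*((2+β^2)*Real.exp β)^2
        ≤ (p₁*(1-p₁))*(Real.exp (2*β)+1)^2 := by
      apply mul_le_mul_of_nonneg_left _ hpq0.le
      exact pow_le_pow_left₀ (by positivity) hcosh 2
    have h2 : (p₁*(1-p₁))*((2+β^2)*Real.exp β)^2 ≤ Real.exp (2*β) :=
      le_trans h1 key_poly
    have hv2 : (0:ℝ) < Real.exp β ^ 2 := by positivity
    have h3 : (p₁*(1-p₁))*(2+β^2)^2 * Real.exp β ^2 ≤ 1 * Real.exp β ^2 := by
      calc (p₁*(1-p₁))*(2+β^2)^2 * Real.exp β ^2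
          = (p₁*(1-p₁))*((2+β^2)*Real.exp β)^2 := by ring
      _ ≤ Real.exp (2*β) := h2
      _ = 1 * Real.exp β ^2 := by rw [one_mul, hveq]
    have h4 := le_of_mul_le_mul_right h3 hv2
    nlinarith [h4]
  have hs0 : (0:ℝ) < 1+β^2/2 := by positivity
  have hA1 : Real.log (4*(p₁*(1-p₁))) ≤ -(2*Real.log (1+β^2/2)) := by
    have h5 : 4*(p₁*(1-p₁)) ≤ 1/(1+β^2/2)^2 := by
      rw [le_div_iff₀ (by positivity)]; linarith [h4pq_cosh]
    calc Real.log (4*(p₁*(1-p₁))) ≤ Real.log (1/(1+β^2/2)^2) :=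
          Real.log_le_log h4pq0 h5
    _ = -(2*Real.log (1+β^2/2)) := by
          rw [one_div, Real.log_inv, Real.log_pow]; push_cast; ring
  have hA2 : β^2*(25/33) < 2*Real.log (1+β^2/2) := by
    have h6 : 1 - (1+β^2/2)⁻¹ ≤ Real.log (1+β^2/2) :=
      Real.one_sub_inv_le_log_of_pos hs0
    have h7 : (1+β^2/2)⁻¹ * (1+β^2/2) = 1 := inv_mul_cancel₀ (ne_of_gt hs0)
    have h8 : 1 < (1 - 25*β^2/66)*(1+β^2/2) := by
      nlinarith [mul_pos (mul_pos hβ0 hβ0)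
        (show (0:ℝ) < 16/25 - β^2 by nlinarith [hβ8, hβ0])]
    have h9 : (1+β^2/2)⁻¹ < 1 - 25*β^2/66 := by
      nlinarith [h7, h8, hs0, inv_pos.mpr hs0]
    linarith
  linarith

set_option maxHeartbeats 800000 in
/-- For `p₁ ∈ (1/2, 1)` and `β ∈ (0, min(1, (1/2)log(p₁/(1-p₁)))]` with
`p₁(1+e^{2β}) - e^{2β} > 0`:
`β² + 2 log(1.25(1+e^β)/(p₁(1+e^{2β}) - e^{2β})) · log(2√(p₁(1-p₁))) < 0`. -/
theorem kl_gt_lecuyer (p₁ β : ℝ) (h₁ : 1 / 2 < p₁) (h₂ : p₁ < 1)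
    (hβ0 : 0 < β) (hβ : β ≤ min 1 ((1 / 2) * Real.log (p₁ / (1 - p₁))))
    (hpos : 0 < p₁ * (1 + Real.exp (2 * β)) - Real.exp (2 * β)) :
    β ^ 2 + 2 * Real.log (1.25 * (1 + Real.exp β) /
        (p₁ * (1 + Real.exp (2 * β)) - Real.exp (2 * β))) *
      Real.log (2 * Real.sqrt (p₁ * (1 - p₁))) < 0 := by
  have hq0 : 0 < 1 - p₁ := by linarith
  have hp0 : 0 < p₁ := by linarith
  have hpq0 : 0 < p₁ * (1 - p₁) := mul_pos hp0 hq0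
  have hβ1 : β ≤ 1 := le_trans hβ (min_le_left _ _)
  have hsqrt_eq : Real.log (2 * Real.sqrt (p₁ * (1 - p₁)))
      = Real.log (4*(p₁*(1-p₁)))/2 := by
    rw [Real.log_mul two_ne_zero (ne_of_gt (Real.sqrt_pos.mpr hpq0)),
        Real.log_sqrt hpq0.le, Real.log_mul (by norm_num) (ne_of_gt hpq0),
        show (4:ℝ) = 2^2 by norm_num, Real.log_pow]
    push_cast; ring
  rw [hsqrt_eq]
  set u := Real.exp (2*β) with hu_def
  set v := Real.exp β with hv_def
  set D := p₁ * (1 + u) - u with hD_def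
  set G := Real.log (4*(p₁*(1-p₁))) with hG_def
  have hD0 : 0 < D := hpos
  have hv1 : 1 < v := by
    have := Real.add_one_le_exp β; rw [hv_def]; linarith
  have hu1 : 1 < u := by
    have := Real.add_one_le_exp (2*β); rw [hu_def]; linarith
  have hu_lt : (1-p₁)*u < p₁ := by
    have h : D = p₁ - (1-p₁)*u := by rw [hD_def]; ring
    nlinarith [hD0, h]
  have hDt : D < 2*p₁ - 1 := by
    have h : D = p₁ - (1-p₁)*u := by rw [hD_def]; ring
    nlinarith [hq0, hu1]
  have h4pq0 : 0 < 4*(p₁*(1-p₁)) := by linarith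
  have hN25 : (5:ℝ)/2 < 1.25*(1+v) := by nlinarith [hv1]
  by_cases hc : p₁ ≤ 0.825
  · -- R1 : p₁ ≤ 0.825
    have hβ8 : β < 4/5 := by
      by_contra hcon
      push_neg at hcon
      have h2u : (33:ℝ)/7 < u := by
        have he : ((8:ℕ):ℝ)/((5:ℕ):ℝ) ≤ 2*β := by push_cast; linarith
        have h0 := aux_lt_exp_div (a := 8) (b := 5) (r := (33:ℝ)/7)
          (by norm_num) num1
        rw [hu_def]
        exact lt_of_lt_of_le h0 (Real.exp_le_exp.mpr he)
      have := mul_lt_mul_of_pos_left h2u hq0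
      linarith [hu_lt, hc]
    have hApos' : β^2 * (25/33) < -G := by
      rw [hG_def]
      exact aux_A_bound_R1 h₁ h₂ hβ0 hβ8 hu_lt
    have hL33 : (33:ℝ)/25 < Real.log (1.25*(1+v)/D) := by
      have hD65 : D < 13/20 := lt_of_lt_of_le hDt (by linarith [hc])
      have hND : (50:ℝ)/13 < 1.25*(1+v)/D := by
        rw [lt_div_iff₀ hD0]; linarith [hN25, hD65]
      calc (33:ℝ)/25 = ((33:ℕ):ℝ)/((25:ℕ):ℝ) := by norm_num
      _ < Real.log (50/13) := aux_log_gt (by norm_num) (by norm_num)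
            (by norm_num) num2
      _ ≤ Real.log (1.25*(1+v)/D) := Real.log_le_log (by norm_num) hND.le
    have hfin : β^2 < (-G) * Real.log (1.25*(1+v)/D) := by
      have hGpos : 0 ≤ -G := le_trans (by positivity) hApos'.le
      calc β^2 = (β^2*(25/33))*(33/25) := by ring
      _ < (-G)*(33/25) := mul_lt_mul_of_pos_right hApos' (by norm_num)
      _ ≤ (-G) * Real.log (1.25*(1+v)/D) :=
          mul_le_mul_of_nonneg_left hL33.le hGpos
    linarith [hfin]
  · rw [not_le] at hc
    by_cases hc2 : β ≤ 0.6
    · -- R2 : p₁ > 0.825, β ≤ 0.6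
      have hA : G ≤ -(2*p₁-1)^2 := by
        rw [hG_def]
        have h := Real.log_le_sub_one_of_pos h4pq0
        nlinarith [h]
      have hL' : (6:ℝ)/7 < Real.log (1.25*(1+v)/D) := by
        have hD1 : D < 1 := by linarith [hDt]
        have hND : (5:ℝ)/2 < 1.25*(1+v)/D := by
          rw [lt_div_iff₀ hD0]; nlinarith [hN25, hD1, hD0]
        calc (6:ℝ)/7 = ((6:ℕ):ℝ)/((7:ℕ):ℝ) := by norm_num
        _ < Real.log (5/2) := aux_log_gt (by norm_num) (by norm_num)
              (by norm_num) num3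
        _ ≤ Real.log (1.25*(1+v)/D) := Real.log_le_log (by norm_num) hND.le
      have hApos' : (169:ℝ)/400 < -G := by nlinarith [hA, hc]
      have hfin : β^2 < (-G) * Real.log (1.25*(1+v)/D) := by
        have h1 : β^2 ≤ 9/25 := by nlinarith [hβ0]
        have h2 : (169:ℝ)/400 * (6/7) < (-G) * Real.log (1.25*(1+v)/D) := by
          calc (169:ℝ)/400 * (6/7) < (-G) * (6/7) :=
                mul_lt_mul_of_pos_right hApos' (by norm_num)
          _ ≤ (-G) * Real.log (1.25*(1+v)/D) :=
                mul_le_mul_of_nonneg_left hL'.le (by linarith)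
        nlinarith [h1, h2]
      linarith [hfin]
    · -- R3 : p₁ > 0.825, β > 0.6
      rw [not_le] at hc2
      have hu_lb : 1 + 2*β ≤ u := by
        have := Real.add_one_le_exp (2*β); rw [hu_def]; linarith
      have hDle : D ≤ 3.2*p₁ - 2.2 := by
        have h : D = p₁ - (1-p₁)*u := by rw [hD_def]; ring
        nlinarith [hq0, hc2, hu_lb, mul_le_mul_of_nonneg_left hu_lb hq0.le]
      have hN325 : (13:ℝ)/4 < 1.25*(1+v) := by
        have h := Real.add_one_le_exp β
        rw [hv_def]
        nlinarith [h, hc2]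
      have hLgen : ∀ (a b : ℕ) (d : ℝ), a ≠ 0 → b ≠ 0 → 0 < d → D ≤ d →
          (2.7182818286:ℝ)^a < ((13:ℝ)/4/d)^b →
          ((a:ℝ)/b) < Real.log (1.25*(1+v)/D) := by
        intro a b d ha hb hd hDd hnum
        have hND : (13:ℝ)/4/d < 1.25*(1+v)/D := by
          rw [div_lt_div_iff₀ hd hD0]
          calc 13/4*D ≤ 13/4*d := by nlinarith [hDd]
          _ < 1.25*(1+v)*d := by nlinarith [hN325, hd]
        calc ((a:ℝ)/b) < Real.log ((13:ℝ)/4/d) := aux_log_gt ha hb (by positivity) hnum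
        _ ≤ Real.log (1.25*(1+v)/D) := Real.log_le_log (by positivity) hND.le
      have h4pq_lt : ∀ c : ℝ, 1/2 ≤ c → c < p₁ → 4*(p₁*(1-p₁)) < 4*(c*(1-c)) := by
        intro c h1c h2c
        nlinarith [mul_pos (sub_pos.mpr h2c) (show 0 < p₁ + c - 1 by linarith)]
      by_cases hd1 : p₁ ≤ 0.845
      · have h825 : 4*((0.825:ℝ)*(1-0.825)) = 0.5775 := by norm_num
        have hA := aux_logA (a := 6) (b := 11) h4pq0
          (le_of_lt (h825 ▸ h4pq_lt 0.825 (by norm_num) hc))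
          (by norm_num) (by norm_num) num4
        rw [← hG_def] at hA
        have hL := hLgen 11 6 0.504 (by norm_num) (by norm_num) (by norm_num)
          (by linarith [hDle, hd1]) num5
        exact aux_final hβ1 hβ0 (by push_cast; norm_num)
          (by positivity) (by positivity) hA hL
      · rw [not_le] at hd1
        by_cases hd2 : p₁ ≤ 0.89
        · have h845 : 4*((0.845:ℝ)*(1-0.845)) = 0.5239 := by norm_num
          have hA := aux_logA (a := 9) (b := 14) h4pq0
            (le_of_lt (h845 ▸ h4pq_lt 0.845 (by norm_num) hd1))
            (by norm_num) (by norm_num) num6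
          rw [← hG_def] at hA
          have hL := hLgen 14 9 0.648 (by norm_num) (by norm_num) (by norm_num)
            (by linarith [hDle, hd2]) num7
          exact aux_final hβ1 hβ0 (by push_cast; norm_num)
            (by positivity) (by positivity) hA hL
        · rw [not_le] at hd2
          by_cases hd3 : p₁ ≤ 0.94
          · have h89 : 4*((0.89:ℝ)*(1-0.89)) = 0.3916 := by norm_num
            have hA := aux_logA (a := 13) (b := 14) h4pq0
              (le_of_lt (h89 ▸ h4pq_lt 0.89 (by norm_num) hd2))
              (by norm_num) (by norm_num) num8
            rw [← hG_def] at hA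
            have hL := hLgen 14 13 0.808 (by norm_num) (by norm_num) (by norm_num)
              (by linarith [hDle, hd3]) num9
            exact aux_final hβ1 hβ0 (by push_cast; norm_num)
              (by positivity) (by positivity) hA hL
          · rw [not_le] at hd3
            have h94 : 4*((0.94:ℝ)*(1-0.94)) = 0.2256 := by norm_num
            have hA := aux_logA (a := 1) (b := 1) h4pq0
              (le_of_lt (h94 ▸ h4pq_lt 0.94 (by norm_num) hd3))
              (by norm_num) (by norm_num)
              (by norm_num : (2.7182818286:ℝ)^1 < (((0.2256:ℝ))⁻¹)^1)
            rw [← hG_def] at hA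
            have hL := hLgen 1 1 1 (by norm_num) (by norm_num) (by norm_num)
              (by linarith [hDt, h₂])
              (by norm_num : (2.7182818286:ℝ)^1 < ((13:ℝ)/4/1)^1)
            exact aux_final hβ1 hβ0 (by push_cast; norm_num)
              (by positivity) (by positivity) hA hL
end
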